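/- arXiv:2601.09657 — 9 statements merged into one kernel-verified Lean document; each statement's English description precedes it below -/
import Mathlib

section
/- Assume there is a constant c₀ > 0 such that ‖q‖_* ≤ c₀·‖q‖_{*,h} for all q ∈ V. If u ∈ V and u_h ∈ M_h satisfy the Petrov–Galerkin relation b(v_h, u) = b(v_h, u_h) for all v_h ∈ V_h, then ‖u − u_h‖_{*,h} ≤ c₀ · inf_{p_h ∈ M_h} ‖u − p_h‖_{*,h}. -/
/-!
Lift `q ↦ (ε q, P_h T q)` into `V × V` with the `L²` norm, so that `‖·‖_{*,h}` becomes the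
Hilbert norm `‖L ·‖`. Galerkin orthogonality says `P_h (ε e + T e) = 0` for the error
`e = u - u_h`, and antisymmetry of `T` gives `‖L m‖ = ‖P_h (ε m + T m)‖` for `m ∈ V_h`; with the
assumed bound `‖·‖_* ≤ c₀ ‖·‖_{*,h}` this yields `‖L m‖ ≤ c₀ ‖L m + t L e‖` for every `t`. This
says that the sine of the angle between `L m` and `L e` is at least `1 / c₀`, a condition
symmetric in the two vectors (Kato's `‖I - Π‖ = ‖Π‖` in two dimensions), so also
`‖L e‖ ≤ c₀ ‖L m + L e‖`; take `m = u_h - p_h`.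
-/

open scoped RealInnerProductSpace

theorem norm_le_mul_norm_add_of_forall_norm_le_mul_norm_add_smul
    {F : Type*} [NormedAddCommGroup F] [InnerProductSpace ℝ F] {K : ℝ} (hK : 1 ≤ K)
    {x y : F} (h : ∀ t : ℝ, ‖x‖ ≤ K * ‖x + t • y‖) : ‖y‖ ≤ K * ‖x + y‖ := by
  rcases eq_or_ne x 0 with rfl | hx
  · simpa using le_mul_of_one_le_left (norm_nonneg y) hK
  rcases eq_or_ne y 0 with rfl | hy
  · simpa using (norm_nonneg x).trans (h 0)
  have hxy (t : ℝ) : ‖x + t • y‖ ^ 2 = ‖x‖ ^ 2 + 2 * t * ⟪x, y⟫ + t ^ 2 * ‖y‖ ^ 2 := by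
    rw [norm_add_sq_real, inner_smul_right, norm_smul, mul_pow, Real.norm_eq_abs, sq_abs]
    ring
  have ha : 0 < ‖x‖ := norm_pos_iff.mpr hx
  have hb : 0 < ‖y‖ := norm_pos_iff.mpr hy
  -- the distance from `x` to the line `ℝ y` is attained at `t = -⟪x, y⟫ / ‖y‖²`
  have hgram : ‖x‖ ^ 2 * ‖y‖ ^ 2 ≤ K ^ 2 * (‖x‖ ^ 2 * ‖y‖ ^ 2 - ⟪x, y⟫ ^ 2) := by
    have := pow_le_pow_left₀ (norm_nonneg x) (h (-⟪x, y⟫ / ‖y‖ ^ 2)) 2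
    rw [mul_pow, hxy] at this
    have hb2 : ‖y‖ ^ 2 ≠ 0 := by positivity
    field_simp at this
    nlinarith
  have hsum : ‖x‖ ^ 2 * ‖x + y‖ ^ 2
      = (‖x‖ ^ 2 + ⟪x, y⟫) ^ 2 + (‖x‖ ^ 2 * ‖y‖ ^ 2 - ⟪x, y⟫ ^ 2) := by
    rw [← one_smul ℝ (x + y), smul_add, one_smul, hxy]
    ring
  have hsq : ‖y‖ ^ 2 ≤ (K * ‖x + y‖) ^ 2 := by
    refine le_of_mul_le_mul_left ?_ (pow_pos ha 2)
    nlinarith [sq_nonneg (‖x‖ ^ 2 + ⟪x, y⟫)]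
  exact le_of_sq_le_sq hsq (by positivity)

section

variable {V : Type*} [NormedAddCommGroup V] [InnerProductSpace ℝ V]

theorem norm_smul_add_sq_of_inner_eq_zero {ε : ℝ} {q r : V} (h : ⟪r, q⟫ = 0) :
    ‖ε • q + r‖ ^ 2 = ε ^ 2 * ‖q‖ ^ 2 + ‖r‖ ^ 2 := by
  rw [norm_add_sq_real, inner_smul_left, real_inner_comm, h, norm_smul, mul_pow,
    Real.norm_eq_abs, sq_abs]
  simp

variable (ε : ℝ) (T : V →L[ℝ] V) (W : Submodule ℝ V) [W.HasOrthogonalProjection]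

noncomputable def discreteTrialLift : V →ₗ[ℝ] WithLp 2 (V × V) :=
  (WithLp.linearEquiv 2 ℝ (V × V)).symm.toLinearMap ∘ₗ
    (ε • LinearMap.id).prod (W.starProjection ∘L T).toLinearMap

theorem norm_discreteTrialLift_sq (q : V) :
    ‖discreteTrialLift ε T W q‖ ^ 2 = ε ^ 2 * ‖q‖ ^ 2 + ‖W.starProjection (T q)‖ ^ 2 := by
  rw [WithLp.prod_norm_sq_eq_of_L2]
  simp [discreteTrialLift, norm_smul, mul_pow]

variable {ε T W}

theorem norm_discreteTrialLift_le_norm_smul_add (hT : ∀ q, ⟪T q, q⟫ = 0) (q : V) :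
    ‖discreteTrialLift ε T W q‖ ≤ ‖ε • q + T q‖ := by
  refine le_of_sq_le_sq ?_ (norm_nonneg _)
  rw [norm_discreteTrialLift_sq, norm_smul_add_sq_of_inner_eq_zero (hT q)]
  gcongr
  exact W.norm_starProjection_apply_le (T q)

theorem norm_discreteTrialLift_of_mem (hT : ∀ q, ⟪T q, q⟫ = 0) {m : V} (hm : m ∈ W) :
    ‖discreteTrialLift ε T W m‖ = ‖W.starProjection (ε • m + T m)‖ := by
  have hPm : W.starProjection m = m := W.starProjection_eq_self_iff.mpr hm
  have horth : ⟪W.starProjection (T m), m⟫ = 0 := by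
    rw [W.inner_starProjection_left_eq_right, hPm, hT]
  refine (sq_eq_sq₀ (norm_nonneg _) (norm_nonneg _)).mp ?_
  rw [norm_discreteTrialLift_sq, map_add, map_smul, hPm,
    norm_smul_add_sq_of_inner_eq_zero horth]

theorem starProjection_galerkin_residual_eq_zero {u uh : V}
    (hPG : ∀ v ∈ W, ε * ⟪u, v⟫ + ⟪T u, v⟫ = ε * ⟪uh, v⟫ + ⟪T uh, v⟫) :
    W.starProjection (ε • (u - uh) + T (u - uh)) = 0 := by
  refine W.starProjection_apply_eq_zero_iff.mpr fun v hv => ?_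
  rw [map_sub, inner_add_right, inner_smul_right, inner_sub_right, inner_sub_right,
    real_inner_comm u, real_inner_comm uh, real_inner_comm (T u), real_inner_comm (T uh)]
  linarith [hPG v hv]

theorem norm_discreteTrialLift_le_mul_norm_add_smul_error (hT : ∀ q, ⟪T q, q⟫ = 0) {c₀ : ℝ}
    (hc : ∀ q, ‖ε • q + T q‖ ≤ c₀ * ‖discreteTrialLift ε T W q‖) {u uh : V}
    (hPG : ∀ v ∈ W, ε * ⟪u, v⟫ + ⟪T u, v⟫ = ε * ⟪uh, v⟫ + ⟪T uh, v⟫) {m : V} (hm : m ∈ W)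
    (t : ℝ) :
    ‖discreteTrialLift ε T W m‖ ≤
      c₀ * ‖discreteTrialLift ε T W m + t • discreteTrialLift ε T W (u - uh)‖ := by
  set e := u - uh
  have hsplit : ε • (m + t • e) + T (m + t • e) = (ε • m + T m) + t • (ε • e + T e) := by
    simp only [map_add, map_smul]
    module
  calc ‖discreteTrialLift ε T W m‖ = ‖W.starProjection (ε • m + T m)‖ :=
        norm_discreteTrialLift_of_mem hT hm
    _ = ‖W.starProjection (ε • (m + t • e) + T (m + t • e))‖ := by
        rw [hsplit, map_add _ (ε • m + T m), map_smul,
          starProjection_galerkin_residual_eq_zero hPG, smul_zero, add_zero]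
    _ ≤ ‖ε • (m + t • e) + T (m + t • e)‖ := W.norm_starProjection_apply_le _
    _ ≤ c₀ * ‖discreteTrialLift ε T W (m + t • e)‖ := hc _
    _ = c₀ * ‖discreteTrialLift ε T W m + t • discreteTrialLift ε T W e‖ := by
        rw [map_add, map_smul]

theorem norm_discreteTrialLift_sub_le (hT : ∀ q, ⟪T q, q⟫ = 0) {c₀ : ℝ} (hc₀ : 0 ≤ c₀)
    (hc : ∀ q, ‖ε • q + T q‖ ≤ c₀ * ‖discreteTrialLift ε T W q‖) {u uh p : V}
    (hPG : ∀ v ∈ W, ε * ⟪u, v⟫ + ⟪T u, v⟫ = ε * ⟪uh, v⟫ + ⟪T uh, v⟫) (hp : uh - p ∈ W) :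
    ‖discreteTrialLift ε T W (u - uh)‖ ≤ c₀ * ‖discreteTrialLift ε T W (u - p)‖ := by
  rcases eq_or_ne (discreteTrialLift ε T W (u - uh)) 0 with he | he
  · rw [he, norm_zero]
    positivity
  have hc₁ : 1 ≤ c₀ := by
    refine (le_mul_iff_one_le_left (norm_pos_iff.mpr he)).mp ?_
    exact (norm_discreteTrialLift_le_norm_smul_add hT _).trans (hc _)
  have hsplit : u - p = (uh - p) + (u - uh) := by abel
  rw [hsplit, map_add]
  exact norm_le_mul_norm_add_of_forall_norm_le_mul_norm_add_smul hc₁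
    (norm_discreteTrialLift_le_mul_norm_add_smul_error hT hc hPG hp)

end

theorem stmt_2_general {V : Type*} [NormedAddCommGroup V] [InnerProductSpace ℝ V]
    (ε : ℝ) (T : V →L[ℝ] V)
    (hT : ∀ q : V, ⟪T q, q⟫ = 0)
    (Vh Mh : Submodule ℝ V) [FiniteDimensional ℝ Vh] (hMV : Mh ≤ Vh)
    (nstar nstarh : V → ℝ)
    (hnstar : ∀ q, nstar q = Real.sqrt (ε ^ 2 * ‖q‖ ^ 2 + ‖T q‖ ^ 2))
    (hnstarh : ∀ q, nstarh q =
      Real.sqrt (ε ^ 2 * ‖q‖ ^ 2 + ‖(Vh.orthogonalProjection (T q) : V)‖ ^ 2))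
    (c₀ : ℝ) (hc₀ : 0 < c₀)
    (hc : ∀ q : V, nstar q ≤ c₀ * nstarh q)
    (u uh : V) (huh : uh ∈ Mh)
    (hPG : ∀ vh ∈ Vh, ε * ⟪u, vh⟫ + ⟪T u, vh⟫ = ε * ⟪uh, vh⟫ + ⟪T uh, vh⟫) :
    nstarh (u - uh) ≤ c₀ * ⨅ p : Mh, nstarh (u - (p : V)) := by
  have hnstar_eq (q : V) : nstar q = ‖ε • q + T q‖ := by
    rw [hnstar, ← norm_smul_add_sq_of_inner_eq_zero (hT q), Real.sqrt_sq (norm_nonneg _)]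
  have hnstarh_eq (q : V) : nstarh q = ‖discreteTrialLift ε T Vh q‖ := by
    rw [hnstarh, ← Vh.starProjection_apply, ← norm_discreteTrialLift_sq,
      Real.sqrt_sq (norm_nonneg _)]
  rw [← div_le_iff₀' hc₀]
  refine le_ciInf fun p => ?_
  rw [div_le_iff₀' hc₀, hnstarh_eq, hnstarh_eq]
  refine norm_discreteTrialLift_sub_le hT hc₀.le (fun q => ?_) hPG (hMV (sub_mem huh p.2))
  simpa only [hnstar_eq, hnstarh_eq] using hc q

/-- Quasi-optimal error estimate in the discrete optimal trial norm for a
Petrov–Galerkin discretization of `b(v,u) = ε⟪u,v⟫ + ⟪Tu,v⟫`, where `T` is antisymmetric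
(`⟪Tq,q⟫ = 0`), `‖q‖_*² = ε²‖q‖² + ‖Tq‖²`, `‖q‖_{*,h}² = ε²‖q‖² + ‖P_h T q‖²` with `P_h`
the orthogonal projection onto the finite-dimensional test space `Vh`, and `Mh ≤ Vh`. -/
theorem stmt_2 {V : Type*} [NormedAddCommGroup V] [InnerProductSpace ℝ V]
    (ε : ℝ) (hε : 0 < ε) (T : V →L[ℝ] V)
    (hT : ∀ q : V, ⟪T q, q⟫ = 0)
    (Vh Mh : Submodule ℝ V) [FiniteDimensional ℝ Vh] (hMV : Mh ≤ Vh)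
    (nstar nstarh : V → ℝ)
    (hnstar : ∀ q, nstar q = Real.sqrt (ε ^ 2 * ‖q‖ ^ 2 + ‖T q‖ ^ 2))
    (hnstarh : ∀ q, nstarh q =
      Real.sqrt (ε ^ 2 * ‖q‖ ^ 2 + ‖(Vh.orthogonalProjection (T q) : V)‖ ^ 2))
    (c₀ : ℝ) (hc₀ : 0 < c₀)
    (hc : ∀ q : V, nstar q ≤ c₀ * nstarh q)
    (u uh : V) (huh : uh ∈ Mh)
    (hPG : ∀ vh ∈ Vh, ε * ⟪u, vh⟫ + ⟪T u, vh⟫ = ε * ⟪uh, vh⟫ + ⟪T uh, vh⟫) :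
    nstarh (u - uh) ≤ c₀ * ⨅ p : Mh, nstarh (u - (p : V)) :=
  stmt_2_general ε T hT Vh Mh hMV nstar nstarh hnstar hnstarh c₀ hc₀ hc u uh huh hPG
end

section
/- Let n ≥ 1 be an integer, h = 1/n, x_i = i·h, and let u : [0,1] → ℝ be continuously differentiable. Set a_i := (1/h)·∫_{x_{i−1}}^{x_i} u(x) dx for i = 1, …, n. Then ∫_0^1 u(x)² dx − (1/n)·Σ_{i=1}^n a_i² ≤ (h/π)² · ∫_0^1 u'(x)² dx. -/
/-!
On a cell of length `L`, `∫ u² - L ū² = ∫ (u - ū)²`, where `ū` is the average of `u`, so the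
theorem is the sum over the cells of the Neumann Poincaré inequality
`∫ (u - ū)² ≤ (L / π)² ∫ u'²`. To prove the latter, reflect `u - ū` evenly about the left end
of the cell: the result is continuous, takes equal values at the ends of an interval of length
`2L`, and has mean zero there. For such a function `f` the Fourier coefficients satisfy
`c_n(f) = 2L / (2πin) · c_n(f')` for `n ≠ 0` and `c_0(f) = 0`, so Parseval gives Wirtinger's
inequality `∫ |f|² ≤ (2L / 2π)² ∫ |f'|²`, and both integrals are twice those over the cell.
-/

open MeasureTheory intervalIntegral Set Real Complex

lemma ContinuousOn.memLp_restrict_Ioc {E : Type*} [NormedAddCommGroup E] {f : ℝ → E}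
    {a b : ℝ} (hf : ContinuousOn f (Icc a b)) (p : ENNReal) :
    MemLp f p (volume.restrict (Ioc a b)) := by
  obtain ⟨C, hC⟩ := isCompact_Icc.exists_bound_of_continuousOn hf
  refine .of_bound ((hf.mono Ioc_subset_Icc_self).aestronglyMeasurable measurableSet_Ioc) C ?_
  exact (ae_restrict_iff' measurableSet_Ioc).2
    (.of_forall fun x hx => hC x (Ioc_subset_Icc_self hx))

lemma norm_fourierCoeffOn_of_hasDeriv_right {a b : ℝ} (hab : a < b) {f f' : ℝ → ℂ}
    {n : ℤ} (hn : n ≠ 0) (hf : ContinuousOn f (Icc a b))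
    (hff' : ∀ x ∈ Ioo a b, HasDerivWithinAt f (f' x) (Ioi x) x)
    (hf' : IntervalIntegrable f' volume a b) (hper : f b = f a) :
    ‖fourierCoeffOn hab f n‖
      = (b - a) / (2 * π * |(n : ℝ)|) * ‖fourierCoeffOn hab f' n‖ := by
  rw [fourierCoeffOn_of_hasDeriv_right hab hn (by rwa [uIcc_of_le hab.le])
      (by rwa [min_eq_left hab.le, max_eq_right hab.le]) hf', hper, sub_self, mul_zero,
    zero_sub, norm_mul, norm_neg, norm_mul, ← ofReal_sub, norm_real,
    Real.norm_of_nonneg (sub_nonneg.2 hab.le)]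
  simp only [neg_mul, one_div, inv_neg, mul_inv_rev, inv_I, mul_neg, neg_neg, Complex.norm_mul,
    norm_inv, norm_intCast, norm_I, norm_real, norm_eq_abs, abs_of_pos pi_pos, Complex.norm_ofNat,
    one_mul]
  ring

theorem integral_norm_sq_le_of_hasDeriv_right_of_periodic {a b : ℝ} (hab : a < b)
    {f f' : ℝ → ℂ} (hf : ContinuousOn f (Icc a b))
    (hff' : ∀ x ∈ Ioo a b, HasDerivWithinAt f (f' x) (Ioi x) x)
    (hf' : MemLp f' 2 (volume.restrict (Ioc a b)))
    (hper : f b = f a) (hmean : ∫ x in a..b, f x = 0) :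
    ∫ x in a..b, ‖f x‖ ^ 2 ≤ ((b - a) / (2 * π)) ^ 2 * ∫ x in a..b, ‖f' x‖ ^ 2 := by
  have hf'_int : IntervalIntegrable f' volume a b :=
    (intervalIntegrable_iff_integrableOn_Ioc_of_le hab.le).2 (hf'.integrable one_le_two)
  have hcoeff : ∀ n, ‖fourierCoeffOn hab f n‖ ^ 2
      ≤ ((b - a) / (2 * π)) ^ 2 * ‖fourierCoeffOn hab f' n‖ ^ 2 := by
    intro n
    rcases eq_or_ne n 0 with rfl | hn
    · simp only [fourierCoeffOn_eq_integral, neg_zero, fourier_zero, one_smul, hmean, smul_zero,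
        norm_zero, ne_eq, OfNat.ofNat_ne_zero, not_false_eq_true, zero_pow]
      positivity
    have hn1 : (1 : ℝ) ≤ |(n : ℝ)| := by exact_mod_cast Int.one_le_abs hn
    have hK : (b - a) / (2 * π * |(n : ℝ)|) ≤ (b - a) / (2 * π) :=
      div_le_div_of_nonneg_left (sub_nonneg.2 hab.le) (by positivity)
        (le_mul_of_one_le_right (by positivity) hn1)
    rw [norm_fourierCoeffOn_of_hasDeriv_right hab hn hf hff' hf'_int hper, ← mul_pow]
    gcongr
  have hparseval := hasSum_le hcoeff (hasSum_sq_fourierCoeffOn hab (hf.memLp_restrict_Ioc 2))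
    ((hasSum_sq_fourierCoeffOn hab hf').mul_left _)
  rwa [smul_eq_mul, smul_eq_mul, mul_left_comm,
    mul_le_mul_iff_right₀ (inv_pos.2 (sub_pos.2 hab))] at hparseval

/- `x ↦ p + |x - p|` folds `[2p - q, q]` onto `[p, q]`; composing with it reflects a function
on `[p, q]` evenly about `p`. -/
lemma mapsTo_fold {p q : ℝ} :
    MapsTo (fun x => p + |x - p|) (Icc (2 * p - q) q) (Icc p q) := by
  intro x hx
  simp only [mem_Icc] at hx ⊢
  constructor
  · linarith [abs_nonneg (x - p)]
  · rcases le_total p x with h | h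
    · rw [abs_of_nonneg (sub_nonneg.2 h)]; linarith
    · rw [abs_of_nonpos (sub_nonpos.2 h)]; linarith

lemma hasDerivWithinAt_fold (p x : ℝ) :
    HasDerivWithinAt (fun y => p + |y - p|) (if p ≤ x then 1 else -1) (Ioi x) x := by
  split_ifs with h
  · refine (hasDerivWithinAt_id x _).congr (fun y hy => ?_) ?_
    · rw [abs_of_nonneg (by linarith [mem_Ioi.1 hy])]; exact add_sub_cancel p y
    · rw [abs_of_nonneg (by linarith)]; exact add_sub_cancel p x
  · refine (((hasDerivAt_id x).const_sub (2 * p)).congr_of_eventuallyEq ?_).hasDerivWithinAt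
    filter_upwards [Iio_mem_nhds (not_le.1 h)] with y hy
    rw [abs_of_neg (by linarith [mem_Iio.1 hy])]
    simp only [id]; ring

lemma hasDerivWithinAt_comp_fold {p q x : ℝ} {u u' : ℝ → ℝ}
    (hu : ∀ y ∈ Icc p q, HasDerivWithinAt u (u' y) (Icc p q) y) (hx : x ∈ Ioo (2 * p - q) q) :
    HasDerivWithinAt (fun y => u (p + |y - p|))
      (u' (p + |x - p|) * if p ≤ x then 1 else -1) (Ioi x) x := by
  have hsub : Ioo x q ⊆ Icc (2 * p - q) q :=
    Ioo_subset_Icc_self.trans (Icc_subset_Icc hx.1.le le_rfl)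
  refine HasDerivWithinAt.Ioi_of_Ioo hx.2 ?_
  exact (hu _ (mapsTo_fold (Ioo_subset_Icc_self hx))).comp x
    ((hasDerivWithinAt_fold p x).mono Ioo_subset_Ioi_self) (mapsTo_fold.mono_left hsub)

lemma integral_comp_fold {p q : ℝ} (hpq : p ≤ q) {φ : ℝ → ℝ} (hφ : ContinuousOn φ (Icc p q)) :
    ∫ x in (2 * p - q)..q, φ (p + |x - p|) = 2 * ∫ x in p..q, φ x := by
  have hcont : ContinuousOn (fun x => φ (p + |x - p|)) (Icc (2 * p - q) q) :=
    hφ.comp (by fun_prop) mapsTo_fold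
  have hleft : ∫ x in (2 * p - q)..p, φ (p + |x - p|) = ∫ x in p..q, φ x := by
    have hreflect : EqOn (fun x => φ (p + |x - p|)) (fun x => φ (2 * p - x))
        (uIcc (2 * p - q) p) := by
      intro x hx
      rw [uIcc_of_le (by linarith)] at hx
      simp only [abs_of_nonpos (sub_nonpos.2 hx.2)]
      congr 1
      ring
    rw [integral_congr hreflect, integral_comp_sub_left, show 2 * p - p = p by ring,
      sub_sub_cancel]
  have hright : ∫ x in p..q, φ (p + |x - p|) = ∫ x in p..q, φ x := by
    refine integral_congr fun x hx => ?_
    rw [uIcc_of_le hpq] at hx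
    rw [abs_of_nonneg (by linarith [hx.1]), add_sub_cancel]
  rw [← integral_add_adjacent_intervals (b := p), hleft, hright, two_mul]
  · exact (hcont.mono (Icc_subset_Icc le_rfl hpq)).intervalIntegrable_of_Icc (by linarith)
  · exact (hcont.mono (Icc_subset_Icc (by linarith) le_rfl)).intervalIntegrable_of_Icc hpq

lemma intervalIntegral_eq_smul_interval_average {E : Type*} [NormedAddCommGroup E]
    [NormedSpace ℝ E] (f : ℝ → E) (a b : ℝ) :
    ∫ x in a..b, f x = (b - a) • ⨍ x in a..b, f x := by
  rcases eq_or_ne a b with rfl | hab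
  · simp
  · rw [interval_average_eq, smul_inv_smul₀ (sub_ne_zero.2 hab.symm)]

theorem integral_sq_sub_average_le {p q : ℝ} (hpq : p < q) {u u' : ℝ → ℝ}
    (hu : ∀ x ∈ Icc p q, HasDerivWithinAt u (u' x) (Icc p q) x)
    (hu' : ContinuousOn u' (Icc p q)) :
    ∫ x in p..q, (u x - ⨍ y in p..q, u y) ^ 2
      ≤ ((q - p) / π) ^ 2 * ∫ x in p..q, u' x ^ 2 := by
  set m := ⨍ y in p..q, u y
  have hucont : ContinuousOn u (Icc p q) := fun x hx => (hu x hx).continuousWithinAt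
  have hL2 : MemLp (fun x => ((u' (p + |x - p|) * if p ≤ x then 1 else -1 : ℝ) : ℂ)) 2
      (volume.restrict (Ioc (2 * p - q) q)) := by
    have hs : Measurable fun x : ℝ => if p ≤ x then (1 : ℝ) else -1 :=
      Measurable.ite measurableSet_Ici measurable_const measurable_const
    have hg := (hu'.comp (by fun_prop) mapsTo_fold).memLp_restrict_Ioc 2
    refine hg.of_le (continuous_ofReal.comp_aestronglyMeasurable
      (hg.aestronglyMeasurable.mul hs.aestronglyMeasurable)) (.of_forall fun x => ?_)
    split_ifs <;> simp
  have hends : p + |(2 * p - q) - p| = p + |q - p| := by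
    rw [abs_of_neg (by linarith), abs_of_pos (by linarith)]
    ring
  have hmean : ∫ x in p..q, (u x - m) = 0 := by
    rw [intervalIntegral.integral_sub (hucont.intervalIntegrable_of_Icc hpq.le)
      intervalIntegrable_const, intervalIntegral.integral_const,
      intervalIntegral_eq_smul_interval_average u, sub_self]
  have hW := integral_norm_sq_le_of_hasDeriv_right_of_periodic (by linarith : 2 * p - q < q)
    (f := fun x => ((u (p + |x - p|) - m : ℝ) : ℂ))
    (continuous_ofReal.comp_continuousOn
      ((hucont.comp (by fun_prop) mapsTo_fold).sub continuousOn_const))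
    (fun x hx => ((hasDerivWithinAt_comp_fold hu hx).sub_const m).ofReal_comp) hL2
    (by rw [hends])
    (by rw [intervalIntegral.integral_ofReal,
      integral_comp_fold hpq.le (φ := fun y => u y - m) (hucont.sub continuousOn_const),
      hmean, mul_zero, ofReal_zero])
  have hsign : ∀ x : ℝ, (if p ≤ x then (1 : ℝ) else -1) ^ 2 = 1 := fun x => by
    split_ifs <;> norm_num
  simp only [norm_real, Real.norm_eq_abs, sq_abs, mul_pow, hsign, mul_one] at hW
  rw [integral_comp_fold hpq.le (φ := fun y => (u y - m) ^ 2)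
      ((hucont.sub continuousOn_const).pow 2),
    integral_comp_fold hpq.le (φ := fun y => u' y ^ 2) (hu'.pow 2),
    show (q - (2 * p - q)) / (2 * π) = (q - p) / π by field_simp; ring] at hW
  linarith

lemma integral_sq_sub_average {p q : ℝ} {u : ℝ → ℝ} (hu : IntervalIntegrable u volume p q)
    (hu2 : IntervalIntegrable (fun x => u x ^ 2) volume p q) :
    ∫ x in p..q, (u x - ⨍ y in p..q, u y) ^ 2
      = (∫ x in p..q, u x ^ 2) - (q - p) * (⨍ y in p..q, u y) ^ 2 := by
  set m := ⨍ y in p..q, u y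
  have hexpand : ∀ x, (u x - m) ^ 2 = u x ^ 2 - 2 * m * u x + m ^ 2 := fun x => by ring
  simp only [hexpand]
  rw [intervalIntegral.integral_add (hu2.sub (hu.const_mul _)) intervalIntegrable_const,
    intervalIntegral.integral_sub hu2 (hu.const_mul _), intervalIntegral.integral_const_mul,
    intervalIntegral.integral_const, intervalIntegral_eq_smul_interval_average u, smul_eq_mul,
    smul_eq_mul]
  ring

theorem integral_sq_sub_mul_average_sq_le {p q : ℝ} (hpq : p < q) {u u' : ℝ → ℝ}
    (hu : ∀ x ∈ Icc p q, HasDerivWithinAt u (u' x) (Icc p q) x)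
    (hu' : ContinuousOn u' (Icc p q)) :
    (∫ x in p..q, u x ^ 2) - (q - p) * (⨍ x in p..q, u x) ^ 2
      ≤ ((q - p) / π) ^ 2 * ∫ x in p..q, u' x ^ 2 := by
  have hucont : ContinuousOn u (Icc p q) := fun x hx => (hu x hx).continuousWithinAt
  rw [← integral_sq_sub_average (hucont.intervalIntegrable_of_Icc hpq.le)
    ((hucont.pow 2).intervalIntegrable_of_Icc hpq.le)]
  exact integral_sq_sub_average_le hpq hu hu'

lemma sum_integral_Icc_mesh {E : Type*} [NormedAddCommGroup E] [NormedSpace ℝ E] {f : ℝ → E}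
    {h : ℝ} (hh : 0 ≤ h) (n : ℕ) (hf : IntervalIntegrable f volume 0 (n * h)) :
    ∑ i ∈ Finset.Icc 1 n, ∫ x in ((i : ℝ) - 1) * h..(i : ℝ) * h, f x
      = ∫ x in (0 : ℝ)..n * h, f x := by
  induction n with
  | zero => simp
  | succ n ih =>
    have hmono : (n : ℝ) * h ≤ (n + 1 : ℕ) * h := by gcongr; omega
    have hle : 0 ≤ (n : ℝ) * h := by positivity
    have hmem : (n : ℝ) * h ∈ uIcc 0 ((n + 1 : ℕ) * h) := by
      rw [uIcc_of_le (hle.trans hmono)]; exact ⟨hle, hmono⟩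
    have hcast : ((n + 1 : ℕ) : ℝ) - 1 = n := by push_cast; ring
    rw [Finset.sum_Icc_succ_top (by omega), ih (hf.mono_set (uIcc_subset_uIcc_left hmem)), hcast]
    exact integral_add_adjacent_intervals (hf.mono_set (uIcc_subset_uIcc_left hmem))
      (hf.mono_set (uIcc_subset_uIcc hmem right_mem_uIcc))

/-- For the uniform mesh `x_i = i·h`, `h = 1/n`, and `u` continuously
differentiable on `[0,1]`, with `a_i` the average of `u` on `[x_{i−1}, x_i]`,
`∫_0^1 u² − (1/n)·Σ a_i² ≤ (h/π)²·∫_0^1 (u')²`. -/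
theorem stmt_3 (n : ℕ) (hn : 1 ≤ n) (u u' : ℝ → ℝ)
    (hu : ∀ x ∈ Set.Icc (0:ℝ) 1, HasDerivWithinAt u (u' x) (Set.Icc 0 1) x)
    (hu' : ContinuousOn u' (Set.Icc 0 1)) :
    let h : ℝ := 1 / n
    (∫ x in (0:ℝ)..1, (u x) ^ 2) -
        (1 / (n : ℝ)) * ∑ i ∈ Finset.Icc 1 n,
          ((1 / h) * ∫ x in (((i : ℝ) - 1) * h)..((i : ℝ) * h), u x) ^ 2
      ≤ (h / Real.pi) ^ 2 * ∫ x in (0:ℝ)..1, (u' x) ^ 2 := by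
  intro h
  have hh : 0 < h := by positivity
  have hnh : (n : ℝ) * h = 1 := mul_one_div_cancel (by positivity)
  have hucont : ContinuousOn u (Icc 0 1) := fun x hx => (hu x hx).continuousWithinAt
  have hcell : ∀ i ∈ Finset.Icc 1 n,
      (∫ x in ((i : ℝ) - 1) * h..(i : ℝ) * h, u x ^ 2)
        - h * ((1 / h) * ∫ x in ((i : ℝ) - 1) * h..(i : ℝ) * h, u x) ^ 2
      ≤ (h / π) ^ 2 * ∫ x in ((i : ℝ) - 1) * h..(i : ℝ) * h, u' x ^ 2 := by
    intro i hi
    obtain ⟨hi1, hin⟩ := Finset.mem_Icc.1 hi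
    have hi1' : (1 : ℝ) ≤ i := by exact_mod_cast hi1
    have hsub : Icc (((i : ℝ) - 1) * h) (i * h) ⊆ Icc 0 1 :=
      Icc_subset_Icc (mul_nonneg (by linarith) hh.le) (by rw [← hnh]; gcongr)
    have hlen : (i : ℝ) * h - ((i : ℝ) - 1) * h = h := by ring
    have hpoinc := integral_sq_sub_mul_average_sq_le (by linarith : ((i : ℝ) - 1) * h < i * h)
      (fun x hx => (hu x (hsub hx)).mono hsub) (hu'.mono hsub)
    rwa [interval_average_eq, smul_eq_mul, hlen, ← one_div] at hpoinc
  have hu2 : IntervalIntegrable (fun x => u x ^ 2) volume 0 (n * h) := by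
    rw [hnh]; exact (hucont.pow 2).intervalIntegrable_of_Icc zero_le_one
  have hu'2 : IntervalIntegrable (fun x => u' x ^ 2) volume 0 (n * h) := by
    rw [hnh]; exact (hu'.pow 2).intervalIntegrable_of_Icc zero_le_one
  have hsum := Finset.sum_le_sum hcell
  rwa [Finset.sum_sub_distrib, ← Finset.mul_sum, ← Finset.mul_sum,
    sum_integral_Icc_mesh hh.le n hu2, sum_integral_Icc_mesh hh.le n hu'2, hnh] at hsum
end

section
/- Let n = 2m be an even positive integer, h = 1/n, x_j = j·h, and let ω : [0,1] → ℝ be the continuous 'teeth saw' function that is linear on each subinterval [x_{i−1}, x_i] and satisfies ω(x_j) = 1 for odd j and ω(x_j) = 0 for even j. Then: (a) (1/h)·∫_{x_{i−1}}^{x_i} ω(x) dx = 1/2 for every i = 1, …, n, and consequently (1/n)·Σ_{i=1}^n ((1/h)·∫_{x_{i−1}}^{x_i} ω)² − (∫_0^1 ω)² = 0; (b) Σ_{i=1}^n ∫_{x_{i−1}}^{x_i} (ω'(x))² dx = n² = 1/h² (where on each open subinterval ω' is the constant slope of ω). -/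
/-! On every mesh cell `ω` is affine, with value `0` at one end and `1` at the other. By the
trapezoid rule each cell average is therefore `1/2`, so all averages equal the mean `∫₀¹ ω = 1/2`
and the discrete seminorm vanishes; meanwhile the slope is `±n`, so each cell contributes
`h · n² = n` to `∑ ∫ (ω')²`, for a total of `n²`. -/

open MeasureTheory intervalIntegral Set

theorem integral_eq_of_eqOn_affine {f : ℝ → ℝ} {a b c s : ℝ} (hab : a ≤ b)
    (hf : EqOn f (fun x => c + s * (x - a)) (Icc a b)) :
    ∫ x in a..b, f x = (b - a) * (c + s * (b - a) / 2) := by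
  rw [integral_congr (by rwa [uIcc_of_le hab]), integral_comp_sub_right (fun x => c + s * x),
    integral_add intervalIntegrable_const (intervalIntegrable_id.const_mul s),
    intervalIntegral.integral_const, intervalIntegral.integral_const_mul, integral_id]
  simp only [smul_eq_mul]
  ring

theorem integral_comp_deriv_of_eqOn_affine {f : ℝ → ℝ} {a b c s : ℝ} (g : ℝ → ℝ) (hab : a ≤ b)
    (hf : EqOn f (fun x => c + s * (x - a)) (Icc a b)) :
    ∫ x in a..b, g (deriv f x) = (b - a) * g s := by
  have hderiv : EqOn (deriv f) (fun _ => s) (Ioo a b) := fun x hx => by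
    have hloc : f =ᶠ[nhds x] fun x => c + s * (x - a) :=
      Filter.eventuallyEq_of_mem (Ioo_mem_nhds hx.1 hx.2) (hf.mono Ioo_subset_Icc_self)
    rw [hloc.deriv_eq]
    simp
  rw [integral_of_le hab, integral_Ioc_eq_integral_Ioo,
    setIntegral_congr_fun measurableSet_Ioo fun x hx => congrArg g (hderiv hx),
    setIntegral_const, Real.volume_real_Ioo_of_le hab, smul_eq_mul]

def IsTeethSaw (n : ℕ) (ω : ℝ → ℝ) : Prop :=
  ∀ j : ℕ, j < n → ∀ x ∈ Set.Icc ((j : ℝ) * (1 / n)) (((j : ℝ) + 1) * (1 / n)),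
    ω x = if Even j then (x - (j : ℝ) * (1 / n)) * n else 1 - (x - (j : ℝ) * (1 / n)) * n

namespace IsTeethSaw

variable {n : ℕ} {ω : ℝ → ℝ} {i : ℕ}

/-- Writing `σ = (-1) ^ (i - 1)`, the left value `(1 - σ) / 2` and the slope `σ n` cover both
parities at once. -/
theorem eqOn_affine (hω : IsTeethSaw n ω) (hi : i ∈ Finset.Icc 1 n) :
    EqOn ω (fun x => (1 - (-1) ^ (i - 1)) / 2 + (-1) ^ (i - 1) * n * (x - ((i : ℝ) - 1) * (1 / n)))
      (Icc (((i : ℝ) - 1) * (1 / n)) (i * (1 / n))) := by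
  obtain ⟨hi1, hin⟩ := Finset.mem_Icc.mp hi
  obtain ⟨j, rfl⟩ : ∃ j, i = j + 1 := ⟨i - 1, by omega⟩
  intro x hx
  simp only [Nat.add_sub_cancel, Nat.cast_add, Nat.cast_one, add_sub_cancel_right] at hx ⊢
  rw [hω j (by omega) x hx]
  rcases Nat.even_or_odd j with hj | hj
  · rw [if_pos hj, hj.neg_one_pow]
    ring
  · rw [if_neg (Nat.not_even_iff_odd.mpr hj), hj.neg_one_pow]
    ring

theorem integral_cell (hω : IsTeethSaw n ω) (hi : i ∈ Finset.Icc 1 n) :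
    ∫ x in ((i : ℝ) - 1) * (1 / n)..i * (1 / n), ω x = 1 / n / 2 := by
  have hn : (n : ℝ) ≠ 0 := Nat.cast_ne_zero.mpr (by simp at hi; omega)
  rw [integral_eq_of_eqOn_affine (by gcongr; linarith) (hω.eqOn_affine hi)]
  field_simp
  ring

theorem integral_deriv_sq_cell (hω : IsTeethSaw n ω) (hi : i ∈ Finset.Icc 1 n) :
    ∫ x in ((i : ℝ) - 1) * (1 / n)..i * (1 / n), deriv ω x ^ 2 = n := by
  have hn : (n : ℝ) ≠ 0 := Nat.cast_ne_zero.mpr (by simp at hi; omega)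
  rw [integral_comp_deriv_of_eqOn_affine (· ^ 2) (by gcongr; linarith) (hω.eqOn_affine hi)]
  rw [mul_pow, ← pow_mul, pow_mul', neg_one_sq, one_pow]
  field_simp
  ring

theorem integral_zero_one (hω : IsTeethSaw n ω) (hn : 1 ≤ n) :
    ∫ x in (0 : ℝ)..1, ω x = 1 / 2 := by
  have hn0 : (n : ℝ) ≠ 0 := by positivity
  have hcell : ∀ k < n, ∫ x in (k : ℝ) * (1 / n)..((k + 1 : ℕ) : ℝ) * (1 / n), ω x = 1 / n / 2 :=
    fun k hk => by simpa using hω.integral_cell (i := k + 1) (Finset.mem_Icc.mpr ⟨by omega, hk⟩)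
  -- each cell has a nonzero integral, so `ω` is integrable on it
  have hsum := sum_integral_adjacent_intervals (a := fun k : ℕ => k * (1 / n : ℝ)) fun k hk =>
    intervalIntegrable_of_integral_ne_zero (by rw [hcell k hk]; positivity)
  rw [Finset.sum_congr rfl fun k hk => hcell k (Finset.mem_range.mp hk), Finset.sum_const,
    Finset.card_range, nsmul_eq_mul, Nat.cast_zero, zero_mul, mul_one_div_cancel hn0] at hsum
  rw [← hsum]
  field_simp

end IsTeethSaw

/-- The "teeth saw" function `ω` on the uniform mesh with `n = 2m`
subintervals (piecewise linear, `ω(x_j) = 1` for odd `j`, `0` for even `j`) has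
subinterval averages `1/2`, hence discrete seminorm `|ω|_{*,h} = 0`, while
`Σ ∫ (ω')² = n² = 1/h²`. -/
theorem stmt_5 (m : ℕ) (hm : 1 ≤ m) (n : ℕ) (hn : n = 2 * m) (ω : ℝ → ℝ)
    (hω : ∀ j : ℕ, j < n → ∀ x ∈ Set.Icc ((j : ℝ) * (1 / n)) (((j : ℝ) + 1) * (1 / n)),
      ω x = if Even j then (x - (j : ℝ) * (1 / n)) * n
            else 1 - (x - (j : ℝ) * (1 / n)) * n) :
    let h : ℝ := 1 / n
    (∀ i ∈ Finset.Icc 1 n,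
        (1 / h) * (∫ x in (((i : ℝ) - 1) * h)..((i : ℝ) * h), ω x) = 1 / 2) ∧
    ((1 / (n : ℝ)) * (∑ i ∈ Finset.Icc 1 n,
        ((1 / h) * ∫ x in (((i : ℝ) - 1) * h)..((i : ℝ) * h), ω x) ^ 2)
      - (∫ x in (0:ℝ)..1, ω x) ^ 2 = 0) ∧
    (∑ i ∈ Finset.Icc 1 n,
        (∫ x in (((i : ℝ) - 1) * h)..((i : ℝ) * h), (deriv ω x) ^ 2) = (n : ℝ) ^ 2) ∧
    ((n : ℝ) ^ 2 = 1 / h ^ 2) := by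
  have hn1 : 1 ≤ n := by omega
  have hn0 : (n : ℝ) ≠ 0 := by positivity
  have hsaw : IsTeethSaw n ω := hω
  have hmean : ∀ i ∈ Finset.Icc 1 n,
      (1 / (1 / n : ℝ)) * ∫ x in ((i : ℝ) - 1) * (1 / n)..i * (1 / n), ω x = 1 / 2 :=
    fun i hi => by rw [hsaw.integral_cell hi]; field_simp
  refine ⟨hmean, ?_, ?_, by simp⟩
  · rw [Finset.sum_congr rfl fun i hi => by rw [hmean i hi], hsaw.integral_zero_one hn1]
    simp [hn0]
  · rw [Finset.sum_congr rfl fun i hi => hsaw.integral_deriv_sq_cell hi]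
    simp [sq]
end

section
/- Fix ε > 0 and an integer n ≥ 2, let h = 1/n and x_j = j·h, and assume ε/h < 1/2, so that b := 1/2 − ε/h > 0. Let B : [0,h] → ℝ be continuous and nonnegative with B(0) = B(h) = 0 and (1/h)·∫_0^h B(x) dx = b; for i = 1, …, n define B_i : [0,1] → ℝ by B_i(x) = B(x − x_{i−1}) for x ∈ [x_{i−1}, x_i] and B_i(x) = 0 otherwise. Let f : [0,1] → ℝ be continuous and ‖f‖_∞ := sup_{x∈[0,1]} |f(x)|. For 1 ≤ j ≤ n−1 define u_j := ∫_0^{x_j} f(x) dx + ∫_0^{x_1} f(x)·(B_1(x) − φ_0(x)) dx + ∫_{x_j}^{x_{j+1}} f(x)·(φ_j(x) − B_{j+1}(x)) dx (which are the nodal values of the bubble upwinding Petrov–Galerkin solution with this choice of bubble). Then for every j with 1 ≤ j ≤ n−1: |u_j − ∫_0^{x_j} f(x) dx| ≤ 2·‖f‖_∞·(1 − ε/h)·h ≤ 2·‖f‖_∞·h. -/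
/-!
On a mesh cell the bubble `B ≥ 0` and the hat `1 - t/h` are both nonnegative, so
`|B - (1 - t/h)| ≤ B + (1 - t/h)`, whose integral over the cell is `∫ B + h/2 = (1 - ε/h) h`
by the prescribed average of `B`. The error `u_j - ∫_0^{x_j} f` consists of exactly two such
cell integrals (over the first cell and over `[x_j, x_{j+1}]`), each weighted by `f`, whence
the factor `2 ‖f‖_∞`.
-/

open MeasureTheory intervalIntegral Set

noncomputable section

/-- `meshHat h i` and `meshBubble B h i` are the `φ_i` and `B_i` of the statement. -/
def meshHat (h : ℝ) (i : ℕ) (x : ℝ) : ℝ := max 0 (1 - |x - i * h| / h)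

def meshBubble (B : ℝ → ℝ) (h : ℝ) (i : ℕ) (x : ℝ) : ℝ :=
  if x ∈ Icc (((i : ℝ) - 1) * h) ((i : ℝ) * h) then B (x - ((i : ℝ) - 1) * h) else 0

end

variable {B f : ℝ → ℝ} {h : ℝ}

lemma meshHat_add_mul (hh : 0 < h) (i : ℕ) {t : ℝ} (ht : t ∈ Icc 0 h) :
    meshHat h i (t + i * h) = 1 - t / h := by
  have : t / h ≤ 1 := (div_le_one hh).2 ht.2
  rw [meshHat, add_sub_cancel_right, abs_of_nonneg ht.1, max_eq_right (by linarith)]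

lemma meshBubble_succ_add_mul (i : ℕ) {t : ℝ} (ht : t ∈ Icc 0 h) :
    meshBubble B h (i + 1) (t + i * h) = B t := by
  have hmem : t + i * h ∈ Icc ((i : ℝ) * h) ((i + 1) * h) :=
    ⟨by linarith [ht.1], by linarith [ht.2]⟩
  simp only [meshBubble, Nat.cast_succ, add_sub_cancel_right, if_pos hmem]

lemma integral_mul_meshBubble_sub_meshHat (hh : 0 < h) (i : ℕ) :
    ∫ x in (i * h : ℝ)..(i + 1) * h, f x * (meshBubble B h (i + 1) x - meshHat h i x) =
      ∫ t in (0 : ℝ)..h, f (t + i * h) * (B t - (1 - t / h)) := by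
  have hcell : ∫ t in (0 : ℝ)..h, f (t + i * h) * (B t - (1 - t / h)) =
      ∫ t in (0 : ℝ)..h, f (t + i * h) * (meshBubble B h (i + 1) (t + i * h) -
        meshHat h i (t + i * h)) := by
    refine integral_congr fun t ht => ?_
    rw [uIcc_of_le hh.le] at ht
    simp only [meshBubble_succ_add_mul i ht, meshHat_add_mul hh i ht]
  rw [hcell, integral_comp_add_right (fun x => f x * (meshBubble B h (i + 1) x - meshHat h i x)),
    zero_add, add_comm h, ← add_one_mul]

lemma integral_one_sub_div_self (hh : 0 < h) : ∫ t in (0 : ℝ)..h, (1 - t / h) = h / 2 := by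
  rw [integral_sub intervalIntegrable_const (intervalIntegrable_id.div_const h),
    intervalIntegral.integral_div, integral_id, intervalIntegral.integral_const]
  field_simp
  ring

lemma abs_integral_mul_bubble_sub_hat_le {g : ℝ → ℝ} {M : ℝ} (hh : 0 < h)
    (hBc : ContinuousOn B (Icc 0 h)) (hBnn : ∀ t ∈ Icc 0 h, 0 ≤ B t)
    (hg : ∀ t ∈ Icc 0 h, |g t| ≤ M) :
    |∫ t in (0 : ℝ)..h, g t * (B t - (1 - t / h))| ≤
      M * ((∫ t in (0 : ℝ)..h, B t) + h / 2) := by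
  have hM : 0 ≤ M := (abs_nonneg _).trans (hg 0 ⟨le_rfl, hh.le⟩)
  have hBi : IntervalIntegrable B volume 0 h :=
    (hBc.mono (uIcc_of_le hh.le).subset).intervalIntegrable
  have hLi : IntervalIntegrable (fun t => 1 - t / h) volume 0 h :=
    intervalIntegrable_const.sub (intervalIntegrable_id.div_const h)
  have hpt : ∀ t ∈ Ioc 0 h, ‖g t * (B t - (1 - t / h))‖ ≤ M * (B t + (1 - t / h)) := by
    intro t ht
    have htc : t ∈ Icc 0 h := Ioc_subset_Icc_self ht
    have hL : 0 ≤ 1 - t / h := sub_nonneg.2 ((div_le_one hh).2 ht.2)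
    rw [Real.norm_eq_abs, abs_mul]
    exact mul_le_mul (hg t htc) ((abs_sub _ _).trans_eq (by
      rw [abs_of_nonneg (hBnn t htc), abs_of_nonneg hL])) (abs_nonneg _) hM
  calc |∫ t in (0 : ℝ)..h, g t * (B t - (1 - t / h))|
      ≤ ∫ t in (0 : ℝ)..h, M * (B t + (1 - t / h)) :=
        norm_integral_le_of_norm_le hh.le (Filter.Eventually.of_forall hpt)
          ((hBi.add hLi).const_mul M)
    _ = M * ((∫ t in (0 : ℝ)..h, B t) + h / 2) := by
        rw [intervalIntegral.integral_const_mul, integral_add hBi hLi, integral_one_sub_div_self hh]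

theorem stmt_10_general (ε : ℝ) (hε : 0 < ε) (n : ℕ)
    (B : ℝ → ℝ) (hBc : ContinuousOn B (Set.Icc 0 (1 / n)))
    (hBnn : ∀ x ∈ Set.Icc (0:ℝ) (1 / n), 0 ≤ B x)
    (hBavg : ((1:ℝ) / (1 / n)) * (∫ x in (0:ℝ)..(1 / n), B x) = 1 / 2 - ε / ((1:ℝ) / n))
    (f : ℝ → ℝ) (hf : ContinuousOn f (Set.Icc 0 1))
    (j : ℕ) (hj1 : 1 ≤ j) (hj2 : j ≤ n - 1) :
    let h : ℝ := 1 / n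
    let Bi : ℕ → ℝ → ℝ := fun i x =>
      if x ∈ Set.Icc (((i : ℝ) - 1) * h) ((i : ℝ) * h) then B (x - ((i : ℝ) - 1) * h) else 0
    let φ : ℕ → ℝ → ℝ := fun i x => max 0 (1 - |x - (i : ℝ) * h| / h)
    let fsup : ℝ := sSup ((fun x => |f x|) '' Set.Icc (0:ℝ) 1)
    let uj : ℝ := (∫ x in (0:ℝ)..((j : ℝ) * h), f x)
        + (∫ x in (0:ℝ)..h, f x * (Bi 1 x - φ 0 x))
        + ∫ x in ((j : ℝ) * h)..(((j : ℝ) + 1) * h), f x * (φ j x - Bi (j + 1) x)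
    |uj - ∫ x in (0:ℝ)..((j : ℝ) * h), f x| ≤ 2 * fsup * (1 - ε / h) * h ∧
      2 * fsup * (1 - ε / h) * h ≤ 2 * fsup * h := by
  intro h Bi φ fsup uj
  have hn : (j : ℝ) + 1 ≤ n := by exact_mod_cast (by omega : j + 1 ≤ n)
  have hn0 : (0 : ℝ) < n := by linarith [(j.cast_nonneg : (0 : ℝ) ≤ j)]
  have hh : 0 < h := one_div_pos.2 hn0
  have hxj : ((j : ℝ) + 1) * h ≤ 1 := by
    calc ((j : ℝ) + 1) * h ≤ n * h := by gcongr
      _ = 1 := by simp only [h]; field_simp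
  have hh1 : h ≤ 1 :=
    (le_mul_of_one_le_left hh.le (by linarith [(j.cast_nonneg : (0 : ℝ) ≤ j)])).trans hxj
  have hfM : ∀ x ∈ Icc (0 : ℝ) 1, |f x| ≤ fsup := fun x hx =>
    le_csSup (isCompact_Icc.image_of_continuousOn hf.abs).bddAbove (mem_image_of_mem _ hx)
  have hM : 0 ≤ fsup := (abs_nonneg _).trans (hfM 0 ⟨le_rfl, zero_le_one⟩)
  have hIB : (∫ t in (0 : ℝ)..h, B t) + h / 2 = (1 - ε / h) * h := by
    have hB : 1 / h * (∫ t in (0 : ℝ)..h, B t) = 1 / 2 - ε / h := hBavg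
    field_simp at hB ⊢
    linarith
  have hfirst : |∫ x in (0 : ℝ)..h, f x * (Bi 1 x - φ 0 x)| ≤ fsup * ((1 - ε / h) * h) := by
    have hfirst_cell := integral_mul_meshBubble_sub_meshHat (f := f) (B := B) hh 0
    simp only [Nat.cast_zero, zero_mul, zero_add, add_zero, one_mul] at hfirst_cell
    change |∫ x in (0 : ℝ)..h, f x * (meshBubble B h 1 x - meshHat h 0 x)| ≤ _
    rw [hfirst_cell, ← hIB]
    exact abs_integral_mul_bubble_sub_hat_le hh hBc hBnn fun t ht =>
      hfM t ⟨ht.1, ht.2.trans hh1⟩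
  have hlast : |∫ x in ((j : ℝ) * h)..(((j : ℝ) + 1) * h), f x * (φ j x - Bi (j + 1) x)| ≤
      fsup * ((1 - ε / h) * h) := by
    change |∫ x in (j * h : ℝ)..(j + 1) * h,
      f x * (meshHat h j x - meshBubble B h (j + 1) x)| ≤ _
    rw [← abs_neg, ← intervalIntegral.integral_neg]
    simp only [← mul_neg, neg_sub]
    rw [integral_mul_meshBubble_sub_meshHat hh j, ← hIB]
    refine abs_integral_mul_bubble_sub_hat_le hh hBc hBnn fun t ht => hfM _ ⟨?_, ?_⟩
    · exact add_nonneg ht.1 (by positivity)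
    · linarith [ht.2]
  refine ⟨?_, ?_⟩
  · calc |uj - ∫ x in (0:ℝ)..((j : ℝ) * h), f x|
        ≤ |∫ x in (0 : ℝ)..h, f x * (Bi 1 x - φ 0 x)| +
          |∫ x in ((j : ℝ) * h)..(((j : ℝ) + 1) * h), f x * (φ j x - Bi (j + 1) x)| := by
          simp only [uj, add_sub_right_comm, sub_self, zero_add]
          exact abs_add_le _ _
      _ ≤ 2 * fsup * (1 - ε / h) * h := by linarith
  · have : 0 ≤ fsup * (ε / h) * h := by positivity
    linarith

/-- For a nonnegative bubble `B` with average `b = 1/2 − ε/h > 0`, the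
nodal values `u_j` of the bubble UPG solution satisfy
`|u_j − ∫_0^{x_j} f| ≤ 2‖f‖_∞(1 − ε/h)h ≤ 2‖f‖_∞h`. -/
theorem stmt_10 (ε : ℝ) (hε : 0 < ε) (n : ℕ) (hn : 2 ≤ n)
    (hεh : ε / ((1:ℝ) / n) < 1 / 2)
    (B : ℝ → ℝ) (hBc : ContinuousOn B (Set.Icc 0 (1 / n)))
    (hBnn : ∀ x ∈ Set.Icc (0:ℝ) (1 / n), 0 ≤ B x)
    (hB0 : B 0 = 0) (hBh : B (1 / n) = 0)
    (hBavg : ((1:ℝ) / (1 / n)) * (∫ x in (0:ℝ)..(1 / n), B x) = 1 / 2 - ε / ((1:ℝ) / n))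
    (f : ℝ → ℝ) (hf : ContinuousOn f (Set.Icc 0 1))
    (j : ℕ) (hj1 : 1 ≤ j) (hj2 : j ≤ n - 1) :
    let h : ℝ := 1 / n
    let Bi : ℕ → ℝ → ℝ := fun i x =>
      if x ∈ Set.Icc (((i : ℝ) - 1) * h) ((i : ℝ) * h) then B (x - ((i : ℝ) - 1) * h) else 0
    let φ : ℕ → ℝ → ℝ := fun i x => max 0 (1 - |x - (i : ℝ) * h| / h)
    let fsup : ℝ := sSup ((fun x => |f x|) '' Set.Icc (0:ℝ) 1)
    let uj : ℝ := (∫ x in (0:ℝ)..((j : ℝ) * h), f x)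
        + (∫ x in (0:ℝ)..h, f x * (Bi 1 x - φ 0 x))
        + ∫ x in ((j : ℝ) * h)..(((j : ℝ) + 1) * h), f x * (φ j x - Bi (j + 1) x)
    |uj - ∫ x in (0:ℝ)..((j : ℝ) * h), f x| ≤ 2 * fsup * (1 - ε / h) * h ∧
      2 * fsup * (1 - ε / h) * h ≤ 2 * fsup * h :=
  stmt_10_general ε hε n B hBc hBnn hBavg f hf j hj1 hj2
end

section
/- Let ε > 0 and let f : [0,1] → ℝ be continuous. Define u(x) := ∫_0^1 G(x,s)·f(s) ds, where G is the Green's function of the convection-diffusion operator. Then u(0) = u(1) = 0, u is twice differentiable on (0,1), and −ε·u''(x) + u'(x) = f(x) for every x ∈ (0,1). -/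
/-!
For `s < x` the Green's function factors as `G x s = (1 - B x) * (1 - exp (-s/ε))`, and for
`s ≥ x` as `G x s = B x * (exp ((1 - s)/ε) - 1)`, where `B x = (exp (x/ε) - 1)/(exp (1/ε) - 1)`
is the boundary-layer solution of `-εv'' + v' = 0`, `v 0 = 0`, `v 1 = 1`. Hence
`u x = (1 - B x) ∫₀ˣ (1 - exp (-s/ε)) f s ds + B x ∫ₓ¹ (exp ((1 - s)/ε) - 1) f s ds`.
Differentiating, the terms coming from the moving endpoint cancel in `u'` because `G` is
continuous on the diagonal; in `u''` they leave `f x` times the jump of `∂ₓG` across the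
diagonal, which equals `-1/ε`. Since `1 - B` and `B` solve the homogeneous equation, what
remains of `-εu'' + u'` is `f`.
-/

open MeasureTheory intervalIntegral Set

noncomputable def separableKernel (φ₁ g₁ φ₂ g₂ : ℝ → ℝ) (x s : ℝ) : ℝ :=
  if s < x then φ₁ x * g₁ s else φ₂ x * g₂ s

section SeparableKernel

variable {a b x : ℝ} {φ₁ φ₂ g₁ g₂ g : ℝ → ℝ}

theorem hasDerivAt_integral_right_of_continuousOn (hg : ContinuousOn g (Icc a b))
    (hx : x ∈ Ioo a b) : HasDerivAt (fun y => ∫ s in a..y, g s) (g x) x :=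
  integral_hasDerivAt_right
    ((hg.mono (Icc_subset_Icc_right hx.2.le)).intervalIntegrable_of_Icc hx.1.le)
    ((hg.mono Ioo_subset_Icc_self).stronglyMeasurableAtFilter isOpen_Ioo x hx)
    (hg.continuousAt (Icc_mem_nhds hx.1 hx.2))

theorem hasDerivAt_integral_left_of_continuousOn (hg : ContinuousOn g (Icc a b))
    (hx : x ∈ Ioo a b) : HasDerivAt (fun y => ∫ s in y..b, g s) (-g x) x :=
  integral_hasDerivAt_left
    ((hg.mono (Icc_subset_Icc_left hx.1.le)).intervalIntegrable_of_Icc hx.2.le)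
    ((hg.mono Ioo_subset_Icc_self).stronglyMeasurableAtFilter isOpen_Ioo x hx)
    (hg.continuousAt (Icc_mem_nhds hx.1 hx.2))

theorem hasDerivAt_mul_integral_add_mul_integral (hg₁ : ContinuousOn g₁ (Icc a b))
    (hg₂ : ContinuousOn g₂ (Icc a b)) (hx : x ∈ Ioo a b) {φ₁' φ₂' : ℝ}
    (hφ₁ : HasDerivAt φ₁ φ₁' x) (hφ₂ : HasDerivAt φ₂ φ₂' x) :
    HasDerivAt (fun y => φ₁ y * (∫ s in a..y, g₁ s) + φ₂ y * ∫ s in y..b, g₂ s)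
      (φ₁' * (∫ s in a..x, g₁ s) + φ₂' * (∫ s in x..b, g₂ s) +
        (φ₁ x * g₁ x - φ₂ x * g₂ x)) x :=
  ((hφ₁.mul (hasDerivAt_integral_right_of_continuousOn hg₁ hx)).add
    (hφ₂.mul (hasDerivAt_integral_left_of_continuousOn hg₂ hx))).congr_deriv (by ring)

theorem integral_separableKernel (hg₁ : ContinuousOn g₁ (Icc a b))
    (hg₂ : ContinuousOn g₂ (Icc a b)) (hx : x ∈ Icc a b) :
    ∫ s in a..b, separableKernel φ₁ g₁ φ₂ g₂ x s =
      φ₁ x * (∫ s in a..x, g₁ s) + φ₂ x * ∫ s in x..b, g₂ s := by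
  have h₁ : EqOn (fun s => φ₁ x * g₁ s) (separableKernel φ₁ g₁ φ₂ g₂ x) (Ioo a x) :=
    fun s hs => (if_pos hs.2).symm
  have h₂ : EqOn (fun s => φ₂ x * g₂ s) (separableKernel φ₁ g₁ φ₂ g₂ x) (Ioo x b) :=
    fun s hs => (if_neg hs.1.not_gt).symm
  have hi₁ : IntervalIntegrable (fun s => φ₁ x * g₁ s) volume a x :=
    (continuousOn_const.mul (hg₁.mono (Icc_subset_Icc_right hx.2))).intervalIntegrable_of_Icc
      hx.1
  have hi₂ : IntervalIntegrable (fun s => φ₂ x * g₂ s) volume x b :=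
    (continuousOn_const.mul (hg₂.mono (Icc_subset_Icc_left hx.1))).intervalIntegrable_of_Icc
      hx.2
  rw [← integral_add_adjacent_intervals (hi₁.congr_uIoo (uIoo_of_le hx.1 ▸ h₁))
      (hi₂.congr_uIoo (uIoo_of_le hx.2 ▸ h₂)), ← integral_congr_Ioo_of_le hx.1 h₁,
    ← integral_congr_Ioo_of_le hx.2 h₂, intervalIntegral.integral_const_mul,
    intervalIntegral.integral_const_mul]

theorem integral_separableKernel_left (hab : a ≤ b) (hφ₂ : φ₂ a = 0) :
    ∫ s in a..b, separableKernel φ₁ g₁ φ₂ g₂ a s = 0 := by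
  rw [integral_congr_Ioo_of_le hab (g := 0) fun s hs => by
    simp [separableKernel, hs.1.not_gt, hφ₂]]
  exact integral_zero

theorem integral_separableKernel_right (hab : a ≤ b) (hφ₁ : φ₁ b = 0) :
    ∫ s in a..b, separableKernel φ₁ g₁ φ₂ g₂ b s = 0 := by
  rw [integral_congr_Ioo_of_le hab (g := 0) fun s hs => by
    simp [separableKernel, hs.2, hφ₁]]
  exact integral_zero

theorem hasDerivAt_integral_separableKernel (hg₁ : ContinuousOn g₁ (Icc a b))
    (hg₂ : ContinuousOn g₂ (Icc a b)) (hx : x ∈ Ioo a b) {φ₁' φ₂' : ℝ}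
    (hφ₁ : HasDerivAt φ₁ φ₁' x) (hφ₂ : HasDerivAt φ₂ φ₂' x)
    (hdiag : φ₁ x * g₁ x = φ₂ x * g₂ x) :
    HasDerivAt (fun y => ∫ s in a..b, separableKernel φ₁ g₁ φ₂ g₂ y s)
      (φ₁' * (∫ s in a..x, g₁ s) + φ₂' * ∫ s in x..b, g₂ s) x := by
  have h := hasDerivAt_mul_integral_add_mul_integral hg₁ hg₂ hx hφ₁ hφ₂
  rw [hdiag, sub_self, add_zero] at h
  refine h.congr_of_eventuallyEq ?_
  filter_upwards [isOpen_Ioo.mem_nhds hx] with y hy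
  exact integral_separableKernel hg₁ hg₂ (Ioo_subset_Icc_self hy)

theorem hasDerivAt_deriv_integral_separableKernel (hg₁ : ContinuousOn g₁ (Icc a b))
    (hg₂ : ContinuousOn g₂ (Icc a b)) (hx : x ∈ Ioo a b) {φ₁' φ₂' : ℝ → ℝ} {φ₁'' φ₂'' : ℝ}
    (hφ₁ : ∀ y ∈ Ioo a b, HasDerivAt φ₁ (φ₁' y) y)
    (hφ₂ : ∀ y ∈ Ioo a b, HasDerivAt φ₂ (φ₂' y) y)
    (hdiag : ∀ y ∈ Ioo a b, φ₁ y * g₁ y = φ₂ y * g₂ y)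
    (hφ₁' : HasDerivAt φ₁' φ₁'' x) (hφ₂' : HasDerivAt φ₂' φ₂'' x) :
    HasDerivAt (deriv fun y => ∫ s in a..b, separableKernel φ₁ g₁ φ₂ g₂ y s)
      (φ₁'' * (∫ s in a..x, g₁ s) + φ₂'' * (∫ s in x..b, g₂ s) +
        (φ₁' x * g₁ x - φ₂' x * g₂ x)) x := by
  refine (hasDerivAt_mul_integral_add_mul_integral hg₁ hg₂ hx hφ₁' hφ₂').congr_of_eventuallyEq ?_
  filter_upwards [isOpen_Ioo.mem_nhds hx] with y hy
  exact (hasDerivAt_integral_separableKernel hg₁ hg₂ hy (hφ₁ y hy) (hφ₂ y hy)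
    (hdiag y hy)).deriv

end SeparableKernel

namespace ConvectionDiffusion

open Real

variable {ε : ℝ}

noncomputable def boundaryLayer (ε x : ℝ) : ℝ := (exp (x / ε) - 1) / (exp (1 / ε) - 1)

noncomputable def boundaryLayerDeriv (ε x : ℝ) : ℝ := exp (x / ε) / (ε * (exp (1 / ε) - 1))

theorem exp_one_div_sub_one_ne_zero (hε : ε ≠ 0) : exp (1 / ε) - 1 ≠ 0 := by
  simpa [sub_eq_zero] using hε

theorem boundaryLayer_zero : boundaryLayer ε 0 = 0 := by
  simp [boundaryLayer]

theorem boundaryLayer_one (hε : ε ≠ 0) : boundaryLayer ε 1 = 1 :=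
  div_self (exp_one_div_sub_one_ne_zero hε)

theorem hasDerivAt_boundaryLayer (x : ℝ) :
    HasDerivAt (boundaryLayer ε) (boundaryLayerDeriv ε x) x := by
  have h := ((((hasDerivAt_id x).div_const ε).exp).sub_const 1).div_const (exp (1 / ε) - 1)
  exact h.congr_deriv (by simp only [boundaryLayerDeriv, id, ← div_div]; ring)

theorem hasDerivAt_boundaryLayerDeriv (x : ℝ) :
    HasDerivAt (boundaryLayerDeriv ε) (boundaryLayerDeriv ε x / ε) x := by
  have h := (((hasDerivAt_id x).div_const ε).exp).div_const (ε * (exp (1 / ε) - 1))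
  exact h.congr_deriv (by simp only [boundaryLayerDeriv, id, ← div_div]; ring)

theorem exp_div_mul_exp_one_sub_div (ε x : ℝ) :
    exp (x / ε) * exp ((1 - x) / ε) = exp (1 / ε) := by
  rw [← exp_add]; ring_nf

theorem exp_div_mul_exp_neg_div (ε x : ℝ) : exp (x / ε) * exp (-x / ε) = 1 := by
  rw [← exp_add]; ring_nf; exact exp_zero

theorem one_sub_boundaryLayer_mul (hε : ε ≠ 0) (x : ℝ) :
    (1 - boundaryLayer ε x) * (1 - exp (-x / ε)) =
      boundaryLayer ε x * (exp ((1 - x) / ε) - 1) := by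
  have hsplit := exp_div_mul_exp_one_sub_div ε x
  have hinv := exp_div_mul_exp_neg_div ε x
  have hD := exp_one_div_sub_one_ne_zero hε
  unfold boundaryLayer
  rw [one_sub_div hD, div_mul_eq_mul_div, div_mul_eq_mul_div]
  congr 1
  linear_combination (1 - exp ((1 - x) / ε)) * hinv - (1 - exp (-x / ε)) * hsplit

theorem mul_boundaryLayerDeriv_mul (hε : ε ≠ 0) (x : ℝ) :
    ε * boundaryLayerDeriv ε x * ((1 - exp (-x / ε)) + (exp ((1 - x) / ε) - 1)) = 1 := by
  have hsplit := exp_div_mul_exp_one_sub_div ε x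
  have hinv := exp_div_mul_exp_neg_div ε x
  have hD := exp_one_div_sub_one_ne_zero hε
  unfold boundaryLayerDeriv
  rw [mul_div_assoc', mul_div_mul_left _ _ hε, div_mul_eq_mul_div, div_eq_one_iff_eq hD]
  linear_combination hsplit - hinv

end ConvectionDiffusion

open ConvectionDiffusion in
/-- The function `u(x) = ∫_0^1 G(x,s)f(s) ds`, with `G` the Green's function
of `−εu'' + u'` on `(0,1)` with homogeneous Dirichlet conditions, satisfies
`u(0) = u(1) = 0`, is twice differentiable on `(0,1)`, and `−εu'' + u' = f` there. -/
theorem stmt_11 (ε : ℝ) (hε : 0 < ε) (f : ℝ → ℝ) (hf : ContinuousOn f (Set.Icc 0 1)) :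
    let G : ℝ → ℝ → ℝ := fun x s =>
      if s < x then
        (Real.exp (1 / ε) - Real.exp (x / ε)) * (1 - Real.exp (-s / ε)) /
          (Real.exp (1 / ε) - 1)
      else (Real.exp (x / ε) - 1) * (Real.exp ((1 - s) / ε) - 1) / (Real.exp (1 / ε) - 1)
    let u : ℝ → ℝ := fun x => ∫ s in (0:ℝ)..1, G x s * f s
    u 0 = 0 ∧ u 1 = 0 ∧
      (∀ x ∈ Set.Ioo (0:ℝ) 1, DifferentiableAt ℝ u x) ∧
      (∀ x ∈ Set.Ioo (0:ℝ) 1, DifferentiableAt ℝ (deriv u) x) ∧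
      (∀ x ∈ Set.Ioo (0:ℝ) 1, -ε * deriv (deriv u) x + deriv u x = f x) := by
  intro G u
  have hε₀ := hε.ne'
  set g₁ : ℝ → ℝ := fun s => (1 - Real.exp (-s / ε)) * f s
  set g₂ : ℝ → ℝ := fun s => (Real.exp ((1 - s) / ε) - 1) * f s
  have hu : u = fun x => ∫ s in (0:ℝ)..1,
      separableKernel (fun y => 1 - boundaryLayer ε y) g₁ (boundaryLayer ε) g₂ x s := by
    have hD := exp_one_div_sub_one_ne_zero hε₀
    ext x
    refine integral_congr fun s _ => ?_
    simp only [G, g₁, g₂, separableKernel, boundaryLayer]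
    split_ifs
    · rw [one_sub_div hD]; ring
    · ring
  have hg₁ : ContinuousOn g₁ (Icc 0 1) := by fun_prop
  have hg₂ : ContinuousOn g₂ (Icc 0 1) := by fun_prop
  have hφ₁ (y : ℝ) :
      HasDerivAt (fun y => 1 - boundaryLayer ε y) (-boundaryLayerDeriv ε y) y := by
    simpa using (hasDerivAt_boundaryLayer y).const_sub 1
  have hdiag (y : ℝ) : (1 - boundaryLayer ε y) * g₁ y = boundaryLayer ε y * g₂ y := by
    simp only [g₁, g₂, ← mul_assoc, one_sub_boundaryLayer_mul hε₀]
  have hu' (x : ℝ) (hx : x ∈ Ioo 0 1) := hu ▸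
    hasDerivAt_integral_separableKernel hg₁ hg₂ hx (hφ₁ x) (hasDerivAt_boundaryLayer x)
      (hdiag x)
  have hu'' (x : ℝ) (hx : x ∈ Ioo 0 1) := hu ▸
    hasDerivAt_deriv_integral_separableKernel hg₁ hg₂ hx (fun y _ => hφ₁ y)
      (fun y _ => hasDerivAt_boundaryLayer y) (fun y _ => hdiag y)
      (hasDerivAt_boundaryLayerDeriv x).neg (hasDerivAt_boundaryLayerDeriv x)
  refine ⟨hu ▸ integral_separableKernel_left zero_le_one boundaryLayer_zero,
    hu ▸ integral_separableKernel_right zero_le_one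
      (sub_eq_zero.2 (boundaryLayer_one hε₀).symm),
    fun x hx => (hu' x hx).differentiableAt, fun x hx => (hu'' x hx).differentiableAt,
    fun x hx => ?_⟩
  rw [(hu'' x hx).deriv, (hu' x hx).deriv]
  have hW := mul_boundaryLayerDeriv_mul hε₀ x
  field_simp
  linear_combination f x * hW
end

section
/- Fix ε > 0 and an integer n ≥ 2, let h = 1/n, x_j = j·h, and t₀ := tanh(h/(2ε)). Let M be the (n−1)×(n−1) real matrix with entries M(j,j) = 1/t₀, M(j,j−1) = −(1+t₀)/(2t₀), M(j,j+1) = −(1−t₀)/(2t₀), and M(j,i) = 0 for |i−j| ≥ 2, and let N be the (n−1)×(n−1) matrix with entries N(j,i) = G(x_j, x_i), where G is the Green's function of the convection-diffusion operator. Then M·N = N·M = I; that is, M is invertible and M⁻¹ = [G(x_j,x_i)]_{j,i=1,…,n−1}. -/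
/-!
Put `q = exp (h / ε)`. Then `exp (x_J / ε) = q ^ J` and `tanh (h / (2ε)) = (q - 1) / (q + 1)`, so
`(q - 1) M = tridiag (-q, q + 1, -1)`. On either side of the diagonal, `J ↦ G(x_J, x_I)` is a
combination of `1` and `q ^ J`, which this three-term stencil annihilates; it vanishes at `J = 0`
and `J = n`, and its kink at `J = I` contributes exactly `q - 1`. Hence `M N = 1`, and `N M = 1`
because a one-sided inverse of a square matrix is two-sided.
-/

open Real Finset Matrix

theorem Real.tanh_half_eq (x : ℝ) : tanh (x / 2) = (exp x - 1) / (exp x + 1) := by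
  have hx : exp x = exp (x / 2) ^ 2 := by rw [sq, ← exp_add, add_halves]
  rw [tanh_eq_sinh_div_cosh, sinh_eq, cosh_eq, exp_neg, hx]
  field_simp

theorem Fin.sum_univ_ite_val_eq {M : Type*} [AddCommMonoid M] (m t : ℕ) (c : M) :
    ∑ k : Fin m, (if (k : ℕ) = t then c else 0) = if t < m then c else 0 := by
  rw [Fin.sum_univ_eq_sum_range (fun k => if k = t then c else 0), sum_ite_eq']
  simp only [mem_range]

def tridiag {R : Type*} [Zero R] (m : ℕ) (a b c : R) : Matrix (Fin m) (Fin m) R :=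
  Matrix.of fun j i =>
    if (j : ℕ) = (i : ℕ) then a
    else if (i : ℕ) + 1 = (j : ℕ) then b
    else if (j : ℕ) + 1 = (i : ℕ) then c
    else 0

theorem tridiag_mulVec {R : Type*} [NonUnitalNonAssocSemiring R] (m : ℕ) (a b c : R) (v : ℕ → R)
    (hv₀ : v 0 = 0) (hv : v (m + 1) = 0) (j : Fin m) :
    (tridiag m a b c *ᵥ fun k => v (k + 1)) j = b * v j + a * v (j + 1) + c * v (j + 2) := by
  have hsplit : ∀ k : Fin m, tridiag m a b c j k * v (k + 1) =
      (if (k : ℕ) + 1 = j then b * v j else 0) + (if (k : ℕ) = j then a * v (j + 1) else 0)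
        + (if (k : ℕ) = j + 1 then c * v (j + 2) else 0) := by
    intro k
    simp only [tridiag, Matrix.of_apply]
    split_ifs <;> first | omega | (simp only [zero_add, add_zero, zero_mul] <;> congr 2 <;> omega)
  have hsub : ∑ k : Fin m, (if (k : ℕ) + 1 = j then b * v j else 0) = b * v j := by
    rcases j with ⟨_ | j, hj⟩
    · simp [hv₀]
    · simp [Fin.sum_univ_ite_val_eq, show j < m by omega]
  have hsup : (if (j : ℕ) + 1 < m then c * v (j + 2) else 0) = c * v (j + 2) := by
    split_ifs
    · rfl
    · rw [show (j : ℕ) + 2 = m + 1 by omega, hv, mul_zero]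
  simp only [Matrix.mulVec, dotProduct, hsplit, sum_add_distrib, hsub, Fin.sum_univ_ite_val_eq,
    if_pos j.isLt, hsup]

/-- `G(x_J, x_I)` written in `q = exp (h / ε)`, so that `exp (x_J / ε) = q ^ J` and
`exp (1 / ε) = q ^ n`. -/
def discreteGreen {K : Type*} [Field K] (q : K) (n J I : ℕ) : K :=
  if I < J then (q ^ n - q ^ J) * (1 - (q ^ I)⁻¹) / (q ^ n - 1)
  else (q ^ J - 1) * (q ^ n * (q ^ I)⁻¹ - 1) / (q ^ n - 1)

section discreteGreen

variable {K : Type*} [Field K] {q : K} {n : ℕ}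

@[simp]
theorem discreteGreen_zero_left (I : ℕ) : discreteGreen q n 0 I = 0 := by
  simp [discreteGreen]

theorem discreteGreen_self_left {I : ℕ} (hI : I < n) : discreteGreen q n n I = 0 := by
  simp [discreteGreen, hI]

theorem discreteGreen_recurrence (hq : q ≠ 0) (hqn : q ^ n ≠ 1) (J I : ℕ) :
    (q + 1) * discreteGreen q n (J + 1) I - q * discreteGreen q n J I
      - discreteGreen q n (J + 2) I = if J + 1 = I then q - 1 else 0 := by
  have hqn' : q ^ n - 1 ≠ 0 := sub_ne_zero.mpr hqn
  have hqI (I : ℕ) : q ^ I ≠ 0 := pow_ne_zero I hq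
  obtain hlt | rfl | rfl | hgt : I < J ∨ I = J ∨ I = J + 1 ∨ J + 1 < I := by omega
  all_goals
    unfold discreteGreen
    split_ifs <;> first | omega | (field_simp; ring)

end discreteGreen

theorem tridiag_mul_discreteGreen {K : Type*} [Field K] {q : K} {n : ℕ} (hq : q ≠ 0)
    (hq₁ : q ≠ 1) (hqn : q ^ n ≠ 1) :
    tridiag (n - 1) ((q + 1) / (q - 1)) (-(q / (q - 1))) (-(1 / (q - 1))) *
      Matrix.of (fun j i : Fin (n - 1) => discreteGreen q n (j + 1) (i + 1)) = 1 := by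
  have hq₁' : q - 1 ≠ 0 := sub_ne_zero.mpr hq₁
  ext j i
  have hn : n - 1 + 1 = n := by have := j.isLt; omega
  change (tridiag _ _ _ _ *ᵥ fun k => discreteGreen q n (k + 1) (i + 1)) j = _
  rw [tridiag_mulVec _ _ _ _ (fun J => discreteGreen q n J (i + 1)) (discreteGreen_zero_left _)
    (by rw [hn]; exact discreteGreen_self_left (by omega))]
  calc _ = ((q + 1) * discreteGreen q n (j + 1) (i + 1) - q * discreteGreen q n j (i + 1)
          - discreteGreen q n (j + 2) (i + 1)) / (q - 1) := by ring
    _ = _ := by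
      rw [discreteGreen_recurrence hq hqn, Matrix.one_apply]
      simp [Fin.ext_iff, apply_ite (· / (q - 1)), hq₁']

noncomputable def convDiffGreen (ε x s : ℝ) : ℝ :=
  if s < x then
    (exp (1 / ε) - exp (x / ε)) * (1 - exp (-s / ε)) / (exp (1 / ε) - 1)
  else (exp (x / ε) - 1) * (exp ((1 - s) / ε) - 1) / (exp (1 / ε) - 1)

theorem convDiffGreen_natCast_mul {ε h : ℝ} {n : ℕ} (hh : 0 < h) (hnh : n * h = 1) (J I : ℕ) :
    convDiffGreen ε (J * h) (I * h) = discreteGreen (exp (h / ε)) n J I := by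
  have hpow (k : ℕ) : exp (k * h / ε) = exp (h / ε) ^ k := by
    rw [← exp_nat_mul, mul_div_assoc]
  have hone : exp (1 / ε) = exp (h / ε) ^ n := by rw [← hpow, hnh]
  have hlt : (I : ℝ) * h < J * h ↔ I < J := by
    rw [mul_lt_mul_iff_of_pos_right hh, Nat.cast_lt]
  unfold convDiffGreen discreteGreen
  simp only [hlt]
  rw [neg_div, exp_neg, sub_div, exp_sub, hone, hpow, hpow, div_eq_mul_inv (exp (h / ε) ^ n)]

/-- The exponential-bubble UPG stiffness matrix
`M = (1/t₀)·tridiag(−(1+t₀)/2, 1, −(1−t₀)/2)`, `t₀ = tanh(h/(2ε))`, is invertible with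
inverse `[G(x_j, x_i)]`, `G` being the Green's function of `−εu'' + u'`. -/
theorem stmt_13 (ε : ℝ) (hε : 0 < ε) (n : ℕ) (hn : 2 ≤ n) :
    let h : ℝ := 1 / n
    let t₀ : ℝ := Real.tanh (h / (2 * ε))
    let G : ℝ → ℝ → ℝ := fun x s =>
      if s < x then
        (Real.exp (1 / ε) - Real.exp (x / ε)) * (1 - Real.exp (-s / ε)) /
          (Real.exp (1 / ε) - 1)
      else (Real.exp (x / ε) - 1) * (Real.exp ((1 - s) / ε) - 1) / (Real.exp (1 / ε) - 1)
    let M : Matrix (Fin (n - 1)) (Fin (n - 1)) ℝ := Matrix.of fun j i =>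
      if (j : ℕ) = (i : ℕ) then 1 / t₀
      else if (i : ℕ) + 1 = (j : ℕ) then -(1 + t₀) / (2 * t₀)
      else if (j : ℕ) + 1 = (i : ℕ) then -(1 - t₀) / (2 * t₀)
      else 0
    let N : Matrix (Fin (n - 1)) (Fin (n - 1)) ℝ := Matrix.of fun j i =>
      G (((j : ℕ) + 1 : ℝ) * h) (((i : ℕ) + 1 : ℝ) * h)
    M * N = 1 ∧ N * M = 1 := by
  intro h t₀ G M N
  have hh : 0 < h := by positivity
  have hnh : n * h = 1 := mul_one_div_cancel (by positivity)
  set q := exp (h / ε)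
  have hq : 1 < q := one_lt_exp_iff.mpr (by positivity)
  have ht₀ : t₀ = (q - 1) / (q + 1) := by
    rw [← tanh_half_eq, div_div, mul_comm ε]
  have hM : M = tridiag (n - 1) ((q + 1) / (q - 1)) (-(q / (q - 1))) (-(1 / (q - 1))) := by
    have : q - 1 ≠ 0 := by linarith
    have : q + 1 ≠ 0 := by linarith
    change tridiag (n - 1) (1 / t₀) (-(1 + t₀) / (2 * t₀)) (-(1 - t₀) / (2 * t₀)) = _
    congr 1 <;> rw [ht₀] <;> field_simp <;> ring
  have hN : N = Matrix.of fun j i : Fin (n - 1) => discreteGreen q n (j + 1) (i + 1) := by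
    ext j i
    change convDiffGreen ε ((j + 1 : ℝ) * h) ((i + 1 : ℝ) * h) = _
    exact_mod_cast convDiffGreen_natCast_mul hh hnh (j + 1) (i + 1)
  have hMN : M * N = 1 := by
    rw [hM, hN]
    exact tridiag_mul_discreteGreen (by positivity) hq.ne' (one_lt_pow₀ hq (by omega)).ne'
  exact ⟨hMN, mul_eq_one_comm.mp hMN⟩
end

section
/- Fix ε > 0 and an integer n ≥ 2, let h = 1/n and x_j = j·h. Let B^e : [0,h] → ℝ be the exponential bubble B^e(x) = (1 − e^{−x/ε})/(1 − e^{−h/ε}) − x/h; for i = 1, …, n define B^e_i : [0,1] → ℝ by B^e_i(x) = B^e(x − x_{i−1}) for x ∈ [x_{i−1}, x_i] and B^e_i(x) = 0 otherwise, and set g_i := φ_i + B^e_i − B^e_{i+1}. Then for every continuous f : [0,1] → ℝ and every j with 1 ≤ j ≤ n−1: Σ_{i=1}^{n−1} G(x_j, x_i)·∫_0^1 f(s)·g_i(s) ds = ∫_0^1 G(x_j, s)·f(s) ds; that is, the exponential bubble upwinding Petrov–Galerkin solution coincides with the exact solution of −εu'' + u' = f, u(0) = u(1) = 0, at every interior mesh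 node. -/
open MeasureTheory intervalIntegral

/-! On a mesh cell `[x_m, x_{m+1}]` only `g_m` and `g_{m+1}` are nonzero, and there they equal
`1 - ψ` and `ψ` with `ψ(t) = (1 - e^{-t/ε}) / (1 - e^{-h/ε})`. Hence `Σ c_i g_i` interpolates the
nodal values `c_i` by functions `a + b e^{-s/ε}`, cell by cell. As a function of `s`, `G(x_j, s)`
is of that form on every cell (its kink is the node `x_j`) and vanishes at `0` and `1`, so it is
its own interpolant: `Σ G(x_j, x_i) g_i(s) = G(x_j, s)` on `[0, 1]`. Multiply by `f` and
integrate. -/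

noncomputable section

namespace UpwindPetrovGalerkin

-- `hat`, `bubble`, `upwindBasis` and `green` unfold to the `φ`, `Bi`, `g` and `G` of `stmt_14`.
def expShape (ε h t : ℝ) : ℝ := (1 - Real.exp (-t / ε)) / (1 - Real.exp (-h / ε))

def expBubble (ε h x : ℝ) : ℝ := expShape ε h x - x / h

def bubble (ε h : ℝ) (i : ℕ) (x : ℝ) : ℝ :=
  if x ∈ Set.Icc (((i : ℝ) - 1) * h) ((i : ℝ) * h) then expBubble ε h (x - ((i : ℝ) - 1) * h)
  else 0

def hat (h : ℝ) (i : ℕ) (x : ℝ) : ℝ := max 0 (1 - |x - (i : ℝ) * h| / h)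

def upwindBasis (ε h : ℝ) (i : ℕ) (x : ℝ) : ℝ := hat h i x + bubble ε h i x - bubble ε h (i + 1) x

def green (ε x s : ℝ) : ℝ :=
  if s < x then
    (Real.exp (1 / ε) - Real.exp (x / ε)) * (1 - Real.exp (-s / ε)) / (Real.exp (1 / ε) - 1)
  else (Real.exp (x / ε) - 1) * (Real.exp ((1 - s) / ε) - 1) / (Real.exp (1 / ε) - 1)

lemma exists_green_eq_of_le (ε x : ℝ) :
    ∃ a b : ℝ, ∀ s ≤ x, green ε x s = a + b * Real.exp (-s / ε) := by
  refine ⟨(Real.exp (1 / ε) - Real.exp (x / ε)) / (Real.exp (1 / ε) - 1),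
    -((Real.exp (1 / ε) - Real.exp (x / ε)) / (Real.exp (1 / ε) - 1)), fun s hs => ?_⟩
  rw [green]
  rcases hs.lt_or_eq with hs | rfl
  · rw [if_pos hs]
    ring
  · rw [if_neg (lt_irrefl s)]
    have hinv : Real.exp (s / ε) * Real.exp (-s / ε) = 1 := by
      rw [← Real.exp_add, neg_div, add_neg_cancel, Real.exp_zero]
    rw [show (1 - s) / ε = 1 / ε + -s / ε by ring, Real.exp_add]
    linear_combination (Real.exp (1 / ε) - 1) / (Real.exp (1 / ε) - 1) * hinv

lemma exists_green_eq_of_ge (ε x : ℝ) :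
    ∃ a b : ℝ, ∀ s ≥ x, green ε x s = a + b * Real.exp (-s / ε) := by
  refine ⟨-((Real.exp (x / ε) - 1) / (Real.exp (1 / ε) - 1)),
    (Real.exp (x / ε) - 1) * Real.exp (1 / ε) / (Real.exp (1 / ε) - 1), fun s hs => ?_⟩
  rw [green, if_neg (not_lt.2 hs), show (1 - s) / ε = 1 / ε + -s / ε by ring, Real.exp_add]
  ring

lemma green_apply_zero (ε : ℝ) {x : ℝ} (hx : 0 ≤ x) : green ε x 0 = 0 := by
  rcases hx.lt_or_eq with hx | rfl
  · simp [green, hx]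
  · simp [green]

lemma green_apply_one (ε : ℝ) {x : ℝ} (hx : x ≤ 1) : green ε x 1 = 0 := by
  simp [green, not_lt.2 hx]

lemma exists_green_eq_on_cell (ε h : ℝ) (hh : 0 < h) (j m : ℕ) :
    ∃ a b : ℝ, ∀ s ∈ Set.Icc ((m : ℝ) * h) (((m : ℝ) + 1) * h),
      green ε (j * h) s = a + b * Real.exp (-s / ε) := by
  rcases le_or_gt (m + 1) j with hmj | hmj
  · obtain ⟨a, b, hab⟩ := exists_green_eq_of_le ε (j * h)
    have : (m : ℝ) + 1 ≤ j := by exact_mod_cast hmj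
    exact ⟨a, b, fun s hs => hab s (by nlinarith [hs.2])⟩
  · obtain ⟨a, b, hab⟩ := exists_green_eq_of_ge ε (j * h)
    have : (j : ℝ) ≤ m := by exact_mod_cast Nat.lt_succ_iff.1 hmj
    exact ⟨a, b, fun s hs => hab s (by nlinarith [hs.1])⟩

variable {ε h : ℝ}

lemma exp_neg_div_lt_one (hε : 0 < ε) (hh : 0 < h) : Real.exp (-h / ε) < 1 :=
  Real.exp_lt_one_iff.2 (div_neg_of_neg_of_pos (neg_neg_of_pos hh) hε)

@[simp] lemma expShape_zero : expShape ε h 0 = 0 := by simp [expShape]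

lemma expShape_self (hε : 0 < ε) (hh : 0 < h) : expShape ε h h = 1 :=
  div_self (sub_ne_zero.2 (exp_neg_div_lt_one hε hh).ne')

@[simp] lemma expBubble_zero : expBubble ε h 0 = 0 := by simp [expBubble]

lemma expBubble_self (hε : 0 < ε) (hh : 0 < h) : expBubble ε h h = 0 := by
  rw [expBubble, expShape_self hε hh, div_self hh.ne', sub_self]

lemma continuous_expBubble : Continuous (expBubble ε h) := by
  unfold expBubble expShape
  fun_prop

lemma continuous_bubble (hε : 0 < ε) (hh : 0 < h) (i : ℕ) : Continuous (bubble ε h i) := by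
  have hle : ((i : ℝ) - 1) * h ≤ (i : ℝ) * h := by nlinarith
  refine continuous_if (fun x hx => ?_)
    (continuous_expBubble.comp (continuous_sub_right _)).continuousOn continuousOn_const
  rw [Set.ofPred_mem_eq, frontier_Icc hle] at hx
  rcases hx with rfl | rfl
  · simp
  · simpa [show (i : ℝ) * h - ((i : ℝ) - 1) * h = h by ring]
      using expBubble_self hε hh

lemma continuous_hat (h : ℝ) (i : ℕ) : Continuous (hat h i) := by
  unfold hat
  fun_prop

lemma continuous_upwindBasis (hε : 0 < ε) (hh : 0 < h) (i : ℕ) :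
    Continuous (upwindBasis ε h i) :=
  ((continuous_hat h i).add (continuous_bubble hε hh i)).sub (continuous_bubble hε hh (i + 1))

lemma bubble_eq_zero_of_le (hε : 0 < ε) (hh : 0 < h) {i : ℕ} {x : ℝ} (hx : (i : ℝ) * h ≤ x) :
    bubble ε h i x = 0 := by
  unfold bubble
  split_ifs with hmem
  · rw [le_antisymm hmem.2 hx, show (i : ℝ) * h - ((i : ℝ) - 1) * h = h by ring,
      expBubble_self hε hh]
  · rfl

lemma bubble_eq_zero_of_ge {i : ℕ} {x : ℝ} (hx : x ≤ ((i : ℝ) - 1) * h) : bubble ε h i x = 0 := by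
  unfold bubble
  split_ifs with hmem
  · rw [le_antisymm hx hmem.1, sub_self, expBubble_zero]
  · rfl

lemma bubble_of_mem_cell (hε : 0 < ε) (hh : 0 < h) {m i : ℕ} {s : ℝ}
    (hs : s ∈ Set.Icc ((m : ℝ) * h) (((m : ℝ) + 1) * h)) :
    bubble ε h i s = if i = m + 1 then expBubble ε h (s - m * h) else 0 := by
  split_ifs with him
  · subst him
    rw [bubble, if_pos (by push_cast; simpa using hs)]
    push_cast
    ring_nf
  · rcases Nat.lt_or_gt_of_ne him with hi | hi
    · have : (i : ℝ) ≤ m := by exact_mod_cast Nat.lt_succ_iff.1 hi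
      exact bubble_eq_zero_of_le hε hh (by nlinarith [hs.1])
    · have : (m : ℝ) + 2 ≤ i := by exact_mod_cast hi
      exact bubble_eq_zero_of_ge (by nlinarith [hs.2])

lemma hat_eq_zero_of_le (hh : 0 < h) {i : ℕ} {x : ℝ} (hx : h ≤ |x - (i : ℝ) * h|) :
    hat h i x = 0 :=
  max_eq_left (by linarith [(one_le_div hh).2 hx])

lemma hat_eq_of_le (hh : 0 < h) {i : ℕ} {x : ℝ} (hx : |x - (i : ℝ) * h| ≤ h) :
    hat h i x = 1 - |x - (i : ℝ) * h| / h :=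
  max_eq_right (by linarith [(div_le_one hh).2 hx])

lemma hat_of_mem_cell (hh : 0 < h) {m i : ℕ} {s : ℝ}
    (hs : s ∈ Set.Icc ((m : ℝ) * h) (((m : ℝ) + 1) * h)) :
    hat h i s = if i = m + 1 then (s - m * h) / h else if i = m then 1 - (s - m * h) / h
      else 0 := by
  obtain ⟨hs₁, hs₂⟩ := hs
  split_ifs with him him'
  · subst him
    have habs : |s - ((m + 1 : ℕ) : ℝ) * h| = (m + 1) * h - s := by
      push_cast
      rw [abs_of_nonpos (by linarith)]
      ring
    rw [hat_eq_of_le hh (by rw [habs]; linarith), habs]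
    field_simp
    ring
  · subst him'
    have habs : |s - (i : ℝ) * h| = s - i * h := abs_of_nonneg (by linarith)
    rw [hat_eq_of_le hh (by rw [habs]; linarith), habs]
  · rcases lt_or_gt_of_ne him' with hi | hi
    · have : (i : ℝ) + 1 ≤ m := by exact_mod_cast hi
      exact hat_eq_zero_of_le hh (by rw [abs_of_nonneg (by nlinarith)]; nlinarith)
    · have : (m : ℝ) + 2 ≤ i := by exact_mod_cast (show m + 2 ≤ i by omega)
      exact hat_eq_zero_of_le hh (by rw [abs_of_nonpos (by nlinarith)]; nlinarith)

lemma upwindBasis_of_mem_cell (hε : 0 < ε) (hh : 0 < h) {m i : ℕ} {s : ℝ}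
    (hs : s ∈ Set.Icc ((m : ℝ) * h) (((m : ℝ) + 1) * h)) :
    upwindBasis ε h i s = if i = m + 1 then expShape ε h (s - m * h)
      else if i = m then 1 - expShape ε h (s - m * h) else 0 := by
  rw [upwindBasis, hat_of_mem_cell hh hs, bubble_of_mem_cell hε hh hs,
    bubble_of_mem_cell hε hh hs]
  by_cases him : i = m + 1
  · simp [him, expBubble]
  · by_cases him' : i = m <;> simp [him, him', expBubble]

lemma expShape_interpolate (hε : 0 < ε) (hh : 0 < h) (a b x s : ℝ) :
    (a + b * Real.exp (-x / ε)) * (1 - expShape ε h (s - x)) +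
      (a + b * Real.exp (-(x + h) / ε)) * expShape ε h (s - x) =
    a + b * Real.exp (-s / ε) := by
  have hden : 1 - Real.exp (-h / ε) ≠ 0 := sub_ne_zero.2 (exp_neg_div_lt_one hε hh).ne'
  have hxh : Real.exp (-(x + h) / ε) = Real.exp (-x / ε) * Real.exp (-h / ε) := by
    rw [← Real.exp_add]; ring_nf
  have hs : Real.exp (-s / ε) = Real.exp (-x / ε) * Real.exp (-(s - x) / ε) := by
    rw [← Real.exp_add]; ring_nf
  rw [expShape, hxh, hs]
  generalize Real.exp (-x / ε) = u
  generalize Real.exp (-h / ε) = q at hden ⊢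
  generalize Real.exp (-(s - x) / ε) = r
  field_simp
  ring

lemma exists_mem_cell (hh : 0 < h) {n : ℕ} (hn : 0 < n) {s : ℝ}
    (hs : s ∈ Set.Icc 0 ((n : ℝ) * h)) :
    ∃ m < n, s ∈ Set.Icc ((m : ℝ) * h) (((m : ℝ) + 1) * h) := by
  rcases hs.2.lt_or_eq with hlt | heq
  · have hsh : 0 ≤ s / h := div_nonneg hs.1 hh.le
    refine ⟨⌊s / h⌋₊, (Nat.floor_lt hsh).2 ((div_lt_iff₀ hh).2 hlt), ?_, ?_⟩
    · exact (le_div_iff₀ hh).1 (Nat.floor_le hsh)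
    · exact ((div_le_iff₀ hh).1 (Nat.lt_floor_add_one (s / h)).le)
  · refine ⟨n - 1, Nat.sub_lt hn one_pos, ?_, ?_⟩ <;>
      rw [Nat.cast_pred hn, heq] <;> linarith

lemma sum_mul_upwindBasis_of_mem_cell (hε : 0 < ε) (hh : 0 < h) {n m : ℕ} (c : ℕ → ℝ)
    (hc₀ : c 0 = 0) (hcn : c n = 0) (hm : m < n) {s : ℝ}
    (hs : s ∈ Set.Icc ((m : ℝ) * h) (((m : ℝ) + 1) * h)) :
    ∑ i ∈ Finset.Icc 1 (n - 1), c i * upwindBasis ε h i s =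
      c m * (1 - expShape ε h (s - m * h)) + c (m + 1) * expShape ε h (s - m * h) := by
  rw [Finset.sum_eq_add m (m + 1) (by omega)]
  · simp [upwindBasis_of_mem_cell hε hh hs]
  · intro i _ hi
    simp [upwindBasis_of_mem_cell hε hh hs, hi.1, hi.2]
  · intro hm'
    rw [show m = 0 by simp at hm'; omega, hc₀, zero_mul]
  · intro hm'
    rw [show m + 1 = n by simp at hm'; omega, hcn, zero_mul]
theorem sum_green_mul_upwindBasis (hε : 0 < ε) (hh : 0 < h) {n j : ℕ} (hnh : (n : ℝ) * h = 1)
    (hj : j ≤ n) {s : ℝ} (hs : s ∈ Set.Icc 0 1) :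
    ∑ i ∈ Finset.Icc 1 (n - 1), green ε (j * h) (i * h) * upwindBasis ε h i s =
      green ε (j * h) s := by
  have hn : 0 < n := Nat.pos_of_ne_zero fun hn => by simp [hn] at hnh
  have hjh : (j : ℝ) * h ≤ 1 := hnh ▸ by gcongr

  obtain ⟨m, hm, hsm⟩ := exists_mem_cell hh hn (hnh ▸ hs)
  obtain ⟨a, b, hab⟩ := exists_green_eq_on_cell ε h hh j m
  have hm_le : (m : ℝ) * h ≤ ((m : ℝ) + 1) * h := by nlinarith
  rw [sum_mul_upwindBasis_of_mem_cell hε hh _ (by simpa using green_apply_zero ε (by positivity))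
      (by simpa [hnh] using green_apply_one ε hjh) hm hsm,
    hab _ hsm, hab _ ⟨le_rfl, hm_le⟩, Nat.cast_succ, hab _ ⟨hm_le, le_rfl⟩, add_one_mul]
  exact expShape_interpolate hε hh a b _ s

theorem sum_mul_integral_eq_integral {ι : Type*} (S : Finset ι) (c : ι → ℝ) (w : ι → ℝ → ℝ)
    (f F : ℝ → ℝ) {a b : ℝ} (hint : ∀ i ∈ S, IntervalIntegrable (fun s => f s * w i s) volume a b)
    (hsum : ∀ s ∈ Set.uIcc a b, ∑ i ∈ S, c i * w i s = F s) :
    ∑ i ∈ S, c i * ∫ s in a..b, f s * w i s = ∫ s in a..b, F s * f s := by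
  calc ∑ i ∈ S, c i * ∫ s in a..b, f s * w i s
      = ∫ s in a..b, ∑ i ∈ S, c i * (f s * w i s) := by
        rw [integral_finsetSum fun i hi => (hint i hi).const_mul (c i)]
        simp_rw [intervalIntegral.integral_const_mul]
    _ = ∫ s in a..b, F s * f s := integral_congr fun s hs => by
        rw [← hsum s hs, Finset.sum_mul]
        exact Finset.sum_congr rfl fun i _ => by ring

end UpwindPetrovGalerkin

end

open UpwindPetrovGalerkin in
theorem stmt_14_general (ε : ℝ) (hε : 0 < ε) (n : ℕ) (hn : 2 ≤ n)
    (f : ℝ → ℝ) (hf : ContinuousOn f (Set.Icc 0 1))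
    (j : ℕ) (hj2 : j ≤ n - 1) :
    let h : ℝ := 1 / n
    let Be : ℝ → ℝ := fun x => (1 - Real.exp (-x / ε)) / (1 - Real.exp (-h / ε)) - x / h
    let Bi : ℕ → ℝ → ℝ := fun i x =>
      if x ∈ Set.Icc (((i : ℝ) - 1) * h) ((i : ℝ) * h) then Be (x - ((i : ℝ) - 1) * h) else 0
    let φ : ℕ → ℝ → ℝ := fun i x => max 0 (1 - |x - (i : ℝ) * h| / h)
    let g : ℕ → ℝ → ℝ := fun i x => φ i x + Bi i x - Bi (i + 1) x
    let G : ℝ → ℝ → ℝ := fun x s =>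
      if s < x then
        (Real.exp (1 / ε) - Real.exp (x / ε)) * (1 - Real.exp (-s / ε)) /
          (Real.exp (1 / ε) - 1)
      else (Real.exp (x / ε) - 1) * (Real.exp ((1 - s) / ε) - 1) / (Real.exp (1 / ε) - 1)
    ∑ i ∈ Finset.Icc 1 (n - 1),
        G ((j : ℝ) * h) ((i : ℝ) * h) * ∫ s in (0:ℝ)..1, f s * g i s
      = ∫ s in (0:ℝ)..1, G ((j : ℝ) * h) s * f s := by
  intro h Be Bi φ g G
  have hn₀ : (0 : ℝ) < n := by exact_mod_cast (show 0 < n by omega)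
  have hh : 0 < h := one_div_pos.2 hn₀
  have hnh : (n : ℝ) * h = 1 := mul_one_div_cancel hn₀.ne'
  refine sum_mul_integral_eq_integral _ _ (upwindBasis ε h) f _ (fun i _ => ?_) fun s hs => ?_
  · exact (hf.mul (continuous_upwindBasis hε hh i).continuousOn).intervalIntegrable_of_Icc
      zero_le_one
  · rw [Set.uIcc_of_le zero_le_one] at hs
    exact sum_green_mul_upwindBasis hε hh hnh (by omega) hs

/-- The exponential bubble UPG solution recovers the exact solution
`u(x) = ∫_0^1 G(x,s)f(s) ds` at every interior mesh node:
`Σ_{i=1}^{n−1} G(x_j,x_i)·∫_0^1 f·g_i = ∫_0^1 G(x_j,s)f(s) ds`. -/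
theorem stmt_14 (ε : ℝ) (hε : 0 < ε) (n : ℕ) (hn : 2 ≤ n)
    (f : ℝ → ℝ) (hf : ContinuousOn f (Set.Icc 0 1))
    (j : ℕ) (hj1 : 1 ≤ j) (hj2 : j ≤ n - 1) :
    let h : ℝ := 1 / n
    let Be : ℝ → ℝ := fun x => (1 - Real.exp (-x / ε)) / (1 - Real.exp (-h / ε)) - x / h
    let Bi : ℕ → ℝ → ℝ := fun i x =>
      if x ∈ Set.Icc (((i : ℝ) - 1) * h) ((i : ℝ) * h) then Be (x - ((i : ℝ) - 1) * h) else 0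
    let φ : ℕ → ℝ → ℝ := fun i x => max 0 (1 - |x - (i : ℝ) * h| / h)
    let g : ℕ → ℝ → ℝ := fun i x => φ i x + Bi i x - Bi (i + 1) x
    let G : ℝ → ℝ → ℝ := fun x s =>
      if s < x then
        (Real.exp (1 / ε) - Real.exp (x / ε)) * (1 - Real.exp (-s / ε)) /
          (Real.exp (1 / ε) - 1)
      else (Real.exp (x / ε) - 1) * (Real.exp ((1 - s) / ε) - 1) / (Real.exp (1 / ε) - 1)
    ∑ i ∈ Finset.Icc 1 (n - 1),
        G ((j : ℝ) * h) ((i : ℝ) * h) * ∫ s in (0:ℝ)..1, f s * g i s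
      = ∫ s in (0:ℝ)..1, G ((j : ℝ) * h) s * f s :=
  stmt_14_general ε hε n hn f hf j hj2
end

section
/- Fix an integer n ≥ 1, let h = 1/n and x_j = j·h, and let u : [0,1] → ℝ be continuous, linear on each subinterval [x_{j−1}, x_j], and satisfy u(0) = u(1) = 0. Then: (a) h² · Σ_{j=1}^n ∫_{x_{j−1}}^{x_j} (u'(x))² dx ≤ 12 · ∫_0^1 u(x)² dx (derivatives taken on the open subintervals); and (b) ∫_0^1 u(x)² dx ≤ max_{1 ≤ j ≤ n−1} u(x_j)² (with the maximum read as 0 when n = 1). -/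
/-!
On a cell of width `h` on which `u` is affine with end values `a`, `b`, one computes
`∫ u² = h (a² + ab + b²) / 3` and `∫ (u')² = (b - a)² / h`. Since `(b - a)² ≤ 4 (a² + ab + b²)`
and `a² + ab + b² ≤ 3 max (a², b²)`, both inequalities hold cell by cell, and summing over the
`n` cells gives them on `[0, 1]`; the boundary nodes contribute nothing because `u` vanishes there.
-/

open MeasureTheory intervalIntegral Set

section AffineCell

variable {u : ℝ → ℝ} {p q : ℝ}

theorem integral_sq_of_affine (hpq : p < q)
    (hu : ∀ x ∈ Icc p q, u x = u p + (u q - u p) / (q - p) * (x - p)) :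
    ∫ x in p..q, u x ^ 2 = (q - p) / 3 * (u p ^ 2 + u p * u q + u q ^ 2) := by
  have hslope : (u q - u p) / (q - p) * (q - p) = u q - u p :=
    div_mul_cancel₀ _ (sub_ne_zero.2 hpq.ne')
  generalize (u q - u p) / (q - p) = s at hu hslope
  have hF : ∀ x ∈ uIcc p q, HasDerivAt
      (fun y => u p ^ 2 * y + u p * s * (y - p) ^ 2 + s ^ 2 * (y - p) ^ 3 / 3)
      ((u p + s * (x - p)) ^ 2) x := by
    intro x _
    have hlin : HasDerivAt (fun y : ℝ => y - p) 1 x := (hasDerivAt_id x).sub_const p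
    refine ((((hasDerivAt_id x).const_mul (u p ^ 2)).add ((hlin.pow 2).const_mul (u p * s))).add
      (((hlin.pow 3).const_mul (s ^ 2)).div_const 3)).congr_deriv ?_
    ring
  have hcongr : EqOn (fun x => u x ^ 2) (fun x => (u p + s * (x - p)) ^ 2) (uIcc p q) := by
    intro x hx
    rw [uIcc_of_le hpq.le] at hx
    simp only [hu x hx]
  rw [integral_congr hcongr,
    integral_eq_sub_of_hasDerivAt hF ((Continuous.intervalIntegrable (by fun_prop) _ _))]
  linear_combination (q - p) / 3 * (2 * u p + u q + s * (q - p)) * hslope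

theorem deriv_eq_slope_of_affine
    (hu : ∀ x ∈ Icc p q, u x = u p + (u q - u p) / (q - p) * (x - p)) {x : ℝ}
    (hx : x ∈ Ioo p q) : deriv u x = (u q - u p) / (q - p) := by
  have hloc : u =ᶠ[nhds x] fun y => u p + (u q - u p) / (q - p) * (y - p) :=
    Filter.eventuallyEq_of_mem (Icc_mem_nhds hx.1 hx.2) hu
  rw [hloc.deriv_eq]
  simp

theorem integral_deriv_sq_of_affine (hpq : p < q)
    (hu : ∀ x ∈ Icc p q, u x = u p + (u q - u p) / (q - p) * (x - p)) :
    ∫ x in p..q, deriv u x ^ 2 = (u q - u p) ^ 2 / (q - p) := by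
  rw [integral_of_le hpq.le, integral_Ioc_eq_integral_Ioo,
    setIntegral_congr_fun (g := fun _ => ((u q - u p) / (q - p)) ^ 2) measurableSet_Ioo
      (fun x hx => by rw [deriv_eq_slope_of_affine hu hx]),
    setIntegral_const, Real.volume_real_Ioo_of_le hpq.le, smul_eq_mul]
  field_simp [sub_ne_zero.2 hpq.ne']

theorem sq_mul_integral_deriv_sq_le_of_affine (hpq : p < q)
    (hu : ∀ x ∈ Icc p q, u x = u p + (u q - u p) / (q - p) * (x - p)) :
    (q - p) ^ 2 * ∫ x in p..q, deriv u x ^ 2 ≤ 12 * ∫ x in p..q, u x ^ 2 := by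
  rw [integral_deriv_sq_of_affine hpq hu, integral_sq_of_affine hpq hu]
  have hqp : 0 < q - p := sub_pos.2 hpq
  rw [pow_two, mul_assoc, mul_div_cancel₀ _ hqp.ne']
  nlinarith [mul_nonneg hqp.le (sq_nonneg (u p + u q))]

theorem integral_sq_le_of_affine (hpq : p < q)
    (hu : ∀ x ∈ Icc p q, u x = u p + (u q - u p) / (q - p) * (x - p)) {M : ℝ}
    (hp : u p ^ 2 ≤ M) (hq : u q ^ 2 ≤ M) :
    ∫ x in p..q, u x ^ 2 ≤ (q - p) * M := by
  rw [integral_sq_of_affine hpq hu]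
  have hqp : 0 < q - p := sub_pos.2 hpq
  nlinarith [mul_nonneg hqp.le (sq_nonneg (u p - u q))]

end AffineCell

theorem le_sSup_image_Icc_one_pred {g : ℕ → ℝ} (hg : ∀ j, 0 ≤ g j) {n j : ℕ}
    (h0 : g 0 = 0) (hn : g n = 0) (hj : j ≤ n) : g j ≤ sSup (g '' Icc 1 (n - 1)) := by
  -- also for `n ≤ 1`, where the set is empty and `sSup ∅ = 0`
  have hnonneg : 0 ≤ sSup (g '' Icc 1 (n - 1)) :=
    Real.sSup_nonneg (by rintro _ ⟨j, -, rfl⟩; exact hg j)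
  rcases Nat.eq_zero_or_pos j with rfl | hj0
  · rwa [h0]
  rcases hj.eq_or_lt with rfl | hjn
  · rwa [hn]
  exact le_csSup ((finite_Icc _ _).image g).bddAbove ⟨j, ⟨hj0, by omega⟩, rfl⟩

theorem Finset.sum_Icc_one_eq_sum_range {M : Type*} [AddCommMonoid M] (f : ℕ → M) (n : ℕ) :
    ∑ j ∈ Finset.Icc 1 n, f j = ∑ k ∈ Finset.range n, f (k + 1) := by
  rw [Finset.range_eq_Ico, Finset.sum_Ico_add' f 0 n 1, zero_add, Finset.Ico_add_one_right_eq_Icc]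

section UniformMesh

variable {n : ℕ} {u : ℝ → ℝ}

def PiecewiseAffineOnMesh (n : ℕ) (u : ℝ → ℝ) : Prop :=
  ∀ j : ℕ, j < n → ∀ x ∈ Icc ((j : ℝ) * (1 / n)) (((j : ℝ) + 1) * (1 / n)),
    u x = u ((j : ℝ) * (1 / n)) +
      ((u (((j : ℝ) + 1) * (1 / n)) - u ((j : ℝ) * (1 / n))) / (1 / n)) * (x - (j : ℝ) * (1 / n))

theorem mesh_node_mem_Icc {k : ℕ} (hk : k ≤ n) : (k : ℝ) * (1 / n) ∈ Icc (0 : ℝ) 1 := by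
  refine ⟨by positivity, ?_⟩
  rw [mul_one_div]
  exact div_le_one_of_le₀ (by exact_mod_cast hk) n.cast_nonneg

theorem natCast_mul_one_div_self (hn : n ≠ 0) : (n : ℝ) * (1 / n) = 1 :=
  mul_one_div_cancel (Nat.cast_ne_zero.2 hn)

theorem mesh_cell_width (k : ℕ) : ((k : ℝ) + 1) * (1 / n) - (k : ℝ) * (1 / n) = 1 / n := by
  ring

theorem mesh_node_lt_succ (hn : n ≠ 0) (k : ℕ) : (k : ℝ) * (1 / n) < ((k : ℝ) + 1) * (1 / n) :=
  mul_lt_mul_of_pos_right (lt_add_one _) (by positivity)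

theorem PiecewiseAffineOnMesh.eq_chord (hu : PiecewiseAffineOnMesh n u) {k : ℕ} (hk : k < n) :
    ∀ x ∈ Icc ((k : ℝ) * (1 / n)) (((k : ℝ) + 1) * (1 / n)),
      u x = u ((k : ℝ) * (1 / n)) + (u (((k : ℝ) + 1) * (1 / n)) - u ((k : ℝ) * (1 / n))) /
        (((k : ℝ) + 1) * (1 / n) - (k : ℝ) * (1 / n)) * (x - (k : ℝ) * (1 / n)) := by
  rw [mesh_cell_width]
  exact hu k hk

theorem integral_eq_sum_integral_mesh {f : ℝ → ℝ} (hn : n ≠ 0)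
    (hf : IntervalIntegrable f volume 0 1) :
    ∫ x in (0 : ℝ)..1, f x =
      ∑ k ∈ Finset.range n, ∫ x in (k : ℝ) * (1 / n)..((k : ℝ) + 1) * (1 / n), f x := by
  have hsum := sum_integral_adjacent_intervals (a := fun k : ℕ => (k : ℝ) * (1 / n)) (f := f)
    (μ := volume) (n := n) fun k hk => hf.mono_set <| uIcc_subset_uIcc
      (Icc_subset_uIcc (mesh_node_mem_Icc hk.le)) (Icc_subset_uIcc (mesh_node_mem_Icc hk))
  push_cast at hsum
  rw [hsum, zero_mul, natCast_mul_one_div_self hn]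

theorem sq_mul_sum_integral_deriv_sq_le (hn : n ≠ 0) (hu : PiecewiseAffineOnMesh n u)
    (hint : IntervalIntegrable (fun x => u x ^ 2) volume 0 1) :
    (1 / n : ℝ) ^ 2 * ∑ j ∈ Finset.Icc 1 n,
        ∫ x in ((j : ℝ) - 1) * (1 / n)..(j : ℝ) * (1 / n), deriv u x ^ 2 ≤
      12 * ∫ x in (0 : ℝ)..1, u x ^ 2 := by
  rw [Finset.sum_Icc_one_eq_sum_range, integral_eq_sum_integral_mesh hn hint, Finset.mul_sum,
    Finset.mul_sum]
  refine Finset.sum_le_sum fun k hk => ?_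
  have hcell := sq_mul_integral_deriv_sq_le_of_affine (mesh_node_lt_succ hn k)
    (hu.eq_chord (Finset.mem_range.1 hk))
  rw [Nat.cast_add_one, add_sub_cancel_right]
  rwa [mesh_cell_width] at hcell

theorem integral_sq_le_of_sq_le_mesh_nodes (hn : n ≠ 0) (hu : PiecewiseAffineOnMesh n u)
    (hint : IntervalIntegrable (fun x => u x ^ 2) volume 0 1) {M : ℝ}
    (hM : ∀ k ≤ n, u ((k : ℝ) * (1 / n)) ^ 2 ≤ M) :
    ∫ x in (0 : ℝ)..1, u x ^ 2 ≤ M := by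
  calc ∫ x in (0 : ℝ)..1, u x ^ 2
      = ∑ k ∈ Finset.range n, ∫ x in (k : ℝ) * (1 / n)..((k : ℝ) + 1) * (1 / n), u x ^ 2 :=
        integral_eq_sum_integral_mesh hn hint
    _ ≤ ∑ _k ∈ Finset.range n, 1 / n * M := by
        refine Finset.sum_le_sum fun k hk => ?_
        have hk := Finset.mem_range.1 hk
        have hcell := integral_sq_le_of_affine (mesh_node_lt_succ hn k) (hu.eq_chord hk)
          (hM k hk.le) (by exact_mod_cast hM (k + 1) hk)
        rwa [mesh_cell_width] at hcell
    _ = M := by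
        rw [Finset.sum_const, Finset.card_range, nsmul_eq_mul, ← mul_assoc,
          natCast_mul_one_div_self hn, one_mul]

end UniformMesh

/-- Inverse inequalities for continuous piecewise linear functions on the
uniform mesh vanishing at the endpoints:
(a) `h²·Σ_j ∫ (u')² ≤ 12·∫_0^1 u²`; (b) `∫_0^1 u² ≤ max_{1≤j≤n−1} u(x_j)²`
(the maximum read as `0` when `n = 1`; note `sSup ∅ = 0` in `ℝ`). -/
theorem stmt_16 (n : ℕ) (hn : 1 ≤ n) (u : ℝ → ℝ)
    (hcont : ContinuousOn u (Set.Icc 0 1))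
    (hlin : ∀ j : ℕ, j < n → ∀ x ∈ Set.Icc ((j : ℝ) * (1 / n)) (((j : ℝ) + 1) * (1 / n)),
      u x = u ((j : ℝ) * (1 / n)) +
        ((u (((j : ℝ) + 1) * (1 / n)) - u ((j : ℝ) * (1 / n))) / (1 / n)) *
          (x - (j : ℝ) * (1 / n)))
    (hu0 : u 0 = 0) (hu1 : u 1 = 0) :
    let h : ℝ := 1 / n
    (h ^ 2 * ∑ j ∈ Finset.Icc 1 n,
        (∫ x in (((j : ℝ) - 1) * h)..((j : ℝ) * h), (deriv u x) ^ 2)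
      ≤ 12 * ∫ x in (0:ℝ)..1, (u x) ^ 2) ∧
    ((∫ x in (0:ℝ)..1, (u x) ^ 2)
      ≤ sSup ((fun j : ℕ => (u ((j : ℝ) * h)) ^ 2) '' (Set.Icc 1 (n - 1)))) := by
  have hn0 : n ≠ 0 := by omega
  have hint : IntervalIntegrable (fun x => u x ^ 2) volume 0 1 :=
    (hcont.pow 2).intervalIntegrable_of_Icc zero_le_one
  refine ⟨sq_mul_sum_integral_deriv_sq_le hn0 hlin hint,
    integral_sq_le_of_sq_le_mesh_nodes hn0 hlin hint fun k hk => ?_⟩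
  refine le_sSup_image_Icc_one_pred (g := fun j : ℕ => u ((j : ℝ) * (1 / n)) ^ 2)
    (fun _ => sq_nonneg _) (by simp [hu0]) ?_ hk
  simp only [natCast_mul_one_div_self hn0, hu1, zero_pow two_ne_zero]
end

section
/- Fix ε > 0 and an integer n ≥ 1, let h = 1/n and x_j = j·h. Let u(x) := x − (e^{x/ε} − 1)/(e^{1/ε} − 1) and let I_h u : [0,1] → ℝ be its piecewise linear interpolant: the continuous function that is linear on each [x_{j−1}, x_j] with I_h u(x_j) = u(x_j) for all j. Then Σ_{j=1}^n ∫_{x_{j−1}}^{x_j} (u'(x) − (I_h u)'(x))² dx = ((1 + e^{−1/ε})/(1 − e^{−1/ε})) · ( 1/(2ε) − (1/h)·(1 − e^{−h/ε})/(1 + e^{−h/ε}) ), where (I_h u)' is the constant slope (u(x_j) − u(x_{j−1}))/h on each subinterval. -/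
/-! On each cell the slope of the interpolant is the mean of `u'`, so the cell error is
`∫ u'² - (Δu)²/h` (Pythagoras in `L²`). Since `u' = 1 - e^{x/ε}/(ε(e^{1/ε} - 1))`, both
terms are explicit in the nodal values `q^j` of `e^{x/ε}`, `q = e^{h/ε}`; the cell errors form
a geometric progression of ratio `q²`, and `q^n = e^{1/ε}` turns its sum into the closed
form. -/

open MeasureTheory intervalIntegral Real

theorem integral_sq_deriv_sub_slope {f f' : ℝ → ℝ} {a b : ℝ}
    (hf : ∀ x ∈ Set.uIcc a b, HasDerivAt f (f' x) x) (hf' : ContinuousOn f' (Set.uIcc a b)) :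
    ∫ x in a..b, (f' x - (f b - f a) / (b - a)) ^ 2
      = (∫ x in a..b, f' x ^ 2) - (f b - f a) ^ 2 / (b - a) := by
  rcases eq_or_ne a b with rfl | hab
  · simp
  have hint : IntervalIntegrable f' volume a b := hf'.intervalIntegrable
  have hint2 : IntervalIntegrable (fun x => f' x ^ 2) volume a b :=
    (hf'.pow 2).intervalIntegrable
  have hftc : ∫ x in a..b, f' x = f b - f a := integral_eq_sub_of_hasDerivAt hf hint
  set s := (f b - f a) / (b - a)
  calc ∫ x in a..b, (f' x - s) ^ 2
      = ∫ x in a..b, (f' x ^ 2 - 2 * s * f' x + s ^ 2) := by congr 1; ext x; ring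
    _ = (∫ x in a..b, f' x ^ 2) - 2 * s * (f b - f a) + (b - a) * s ^ 2 := by
      rw [integral_add (hint2.sub (hint.const_mul _)) intervalIntegrable_const,
        integral_sub hint2 (hint.const_mul _), intervalIntegral.integral_const_mul, hftc,
        intervalIntegral.integral_const, smul_eq_mul]
    _ = (∫ x in a..b, f' x ^ 2) - (f b - f a) ^ 2 / (b - a) := by
      have : b - a ≠ 0 := sub_ne_zero.mpr hab.symm
      simp only [s]; field_simp; ring

noncomputable def boundaryLayer (ε x : ℝ) : ℝ := x - (exp (x / ε) - 1) / (exp (1 / ε) - 1)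

theorem hasDerivAt_exp_div (ε x : ℝ) :
    HasDerivAt (fun x => exp (x / ε)) (exp (x / ε) / ε) x := by
  simpa [div_eq_mul_inv] using ((hasDerivAt_id x).div_const ε).exp

theorem hasDerivAt_boundaryLayer (ε x : ℝ) :
    HasDerivAt (boundaryLayer ε) (1 - exp (x / ε) / (ε * (exp (1 / ε) - 1))) x := by
  have := (hasDerivAt_id x).sub (((hasDerivAt_exp_div ε x).sub_const 1).div_const
    (exp (1 / ε) - 1))
  rwa [div_div] at this

theorem deriv_boundaryLayer (ε : ℝ) :
    deriv (boundaryLayer ε) = fun x => 1 - exp (x / ε) / (ε * (exp (1 / ε) - 1)) :=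
  funext fun x => (hasDerivAt_boundaryLayer ε x).deriv

theorem integral_deriv_boundaryLayer_sq {ε : ℝ} (hε : ε ≠ 0) (a b : ℝ) :
    ∫ x in a..b, deriv (boundaryLayer ε) x ^ 2
      = b - a - 2 * (exp (b / ε) - exp (a / ε)) / (exp (1 / ε) - 1)
        + (exp (b / ε) ^ 2 - exp (a / ε) ^ 2) / (2 * ε * (exp (1 / ε) - 1) ^ 2) := by
  rw [deriv_boundaryLayer]
  set c := exp (1 / ε) - 1
  have hc : c ≠ 0 := sub_ne_zero.mpr (by simpa using hε)
  have hF : ∀ x, HasDerivAt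
      (fun x => x - 2 * exp (x / ε) / c + exp (x / ε) ^ 2 / (2 * ε * c ^ 2))
      ((1 - exp (x / ε) / (ε * c)) ^ 2) x := fun x => by
    refine (((hasDerivAt_id' x).fun_sub
      (((hasDerivAt_exp_div ε x).const_mul 2).div_const c)).fun_add
      (((hasDerivAt_exp_div ε x).fun_pow 2).div_const (2 * ε * c ^ 2))).congr_deriv ?_
    field_simp
    ring
  rw [integral_eq_sub_of_hasDerivAt (fun x _ => hF x)
    (Continuous.intervalIntegrable (by fun_prop) _ _)]
  ring

theorem integral_sq_deriv_sub_slope_boundaryLayer {ε : ℝ} (hε : ε ≠ 0) {a b : ℝ}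
    (hab : a ≠ b) :
    ∫ x in a..b, (deriv (boundaryLayer ε) x
        - (boundaryLayer ε b - boundaryLayer ε a) / (b - a)) ^ 2
      = (exp (b / ε) ^ 2 - exp (a / ε) ^ 2) / (2 * ε * (exp (1 / ε) - 1) ^ 2)
        - (exp (b / ε) - exp (a / ε)) ^ 2 / ((b - a) * (exp (1 / ε) - 1) ^ 2) := by
  have hc : exp (1 / ε) - 1 ≠ 0 := sub_ne_zero.mpr (by simpa using hε)
  have hba : b - a ≠ 0 := sub_ne_zero.mpr hab.symm
  rw [integral_sq_deriv_sub_slope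
    (fun x _ => (hasDerivAt_boundaryLayer ε x).differentiableAt.hasDerivAt)
    (by rw [deriv_boundaryLayer]; exact Continuous.continuousOn (by fun_prop)),
    integral_deriv_boundaryLayer_sq hε]
  simp only [boundaryLayer]
  field_simp
  ring

theorem integral_sq_deriv_sub_slope_boundaryLayer_cell {ε h : ℝ} (hε : ε ≠ 0) (hh : h ≠ 0)
    (i : ℕ) :
    ∫ x in i * h..(i + 1) * h, (deriv (boundaryLayer ε) x
        - (boundaryLayer ε ((i + 1) * h) - boundaryLayer ε (i * h)) / h) ^ 2
      = (exp (h / ε) ^ 2) ^ i * ((exp (h / ε) ^ 2 - 1) / (2 * ε * (exp (1 / ε) - 1) ^ 2)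
        - (exp (h / ε) - 1) ^ 2 / (h * (exp (1 / ε) - 1) ^ 2)) := by
  have hcell := integral_sq_deriv_sub_slope_boundaryLayer hε
    (a := i * h) (b := (i + 1) * h) (by simpa using hh)
  have hlen : ((i : ℝ) + 1) * h - i * h = h := by ring
  have hnode : ∀ k : ℕ, exp (k * h / ε) = exp (h / ε) ^ k := fun k => by
    rw [mul_div_assoc, exp_nat_mul]
  have hnode_succ : exp ((i + 1) * h / ε) = exp (h / ε) ^ (i + 1) := by
    exact_mod_cast hnode (i + 1)
  rw [hlen, hnode_succ, hnode] at hcell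
  rw [hcell]
  ring

/-- Exact formula for the squared `H¹` seminorm interpolation error of
`u(x) = x − (e^{x/ε} − 1)/(e^{1/ε} − 1)` on the uniform mesh of size `h = 1/n`:
`Σ_j ∫ (u' − slope_j)² = ((1 + e^{−1/ε})/(1 − e^{−1/ε}))·(1/(2ε) − (1/h)·(1 − e^{−h/ε})/(1 + e^{−h/ε}))`,
where `slope_j = (u(x_j) − u(x_{j−1}))/h` is the derivative of the interpolant. -/
theorem stmt_17 (ε : ℝ) (hε : 0 < ε) (n : ℕ) (hn : 1 ≤ n) :
    let h : ℝ := 1 / n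
    let u : ℝ → ℝ := fun x => x - (Real.exp (x / ε) - 1) / (Real.exp (1 / ε) - 1)
    ∑ j ∈ Finset.Icc 1 n,
        (∫ x in (((j : ℝ) - 1) * h)..((j : ℝ) * h),
          (deriv u x - (u ((j : ℝ) * h) - u (((j : ℝ) - 1) * h)) / h) ^ 2)
      = ((1 + Real.exp (-1 / ε)) / (1 - Real.exp (-1 / ε))) *
          (1 / (2 * ε) - (1 / h) * (1 - Real.exp (-h / ε)) / (1 + Real.exp (-h / ε))) := by
  intro h u
  have hn0 : (n : ℝ) ≠ 0 := Nat.cast_ne_zero.mpr (by omega)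
  have hh : h ≠ 0 := one_div_ne_zero hn0
  rw [← Finset.Ico_add_one_right_eq_Icc, Finset.sum_Ico_eq_sum_range, add_tsub_cancel_right]
  simp only [Nat.add_comm 1, Nat.cast_add_one, add_sub_cancel_right, u, ← boundaryLayer.eq_def,
    integral_sq_deriv_sub_slope_boundaryLayer_cell hε.ne' hh, neg_div, exp_neg]
  set q := exp (h / ε)
  set E := exp (1 / ε)
  have hq : 1 < q := one_lt_exp_iff.mpr (by positivity)
  have hE : 1 < E := one_lt_exp_iff.mpr (by positivity)
  have hqn : q ^ n = E := by
    rw [← exp_nat_mul]; congr 1; simp only [h]; field_simp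
  rw [← Finset.sum_mul, geom_sum_eq (by nlinarith), ← pow_mul, mul_comm 2, pow_mul, hqn]
  have : E - 1 ≠ 0 := by linarith
  have : q - 1 ≠ 0 := by linarith
  have : q ^ 2 - 1 ≠ 0 := by nlinarith
  clear_value q E h
  field_simp
  ring
end
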